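/- arXiv:1410.2905 — 3 statements merged into one kernel-verified Lean document; each statement's English description precedes it below -/
import Mathlib

section
/- Let U : [0,∞) → ℝ with U(0) = 0, and let μ, ρ be absolutely continuous Borel probability measures on ℝ with finite second moments such that μ ~ ρ, μ is supported in [a, a+2π) and ρ is supported in [b, b+2π), with Lebesgue densities f and h respectively. Then U∘f ∈ L¹(ℝ, dx) if and only if U∘h ∈ L¹(ℝ, dx), and in that case ∫_{[a,a+2π)} U(f(x)) dx = ∫_{[b,b+2π)} U(h(x)) dx. -/
open MeasureTheory Filter Real Set Topology
open scoped ENNReal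

noncomputable section

attribute [local instance] Classical.propDecidable

instance fact2pi : Fact (0 < 2 * π) := ⟨by positivity⟩

/-- The circle `S¹ = ℝ/2πℤ`. -/
abbrev S1 : Type := AddCircle (2 * π)

/-- The canonical representative of `z : S¹` in `[-π, π)`. -/
def reprIco (z : S1) : ℝ := ((AddCircle.equivIco (2 * π) (-π)) z : ℝ)

/-- `γ` is a coupling of `μ` and `ρ`. -/
def IsCoupling (γ : Measure (S1 × S1)) (μ ρ : Measure S1) : Prop :=
  γ.map Prod.fst = μ ∧ γ.map Prod.snd = ρ

/-- The squared periodic 2-Wasserstein distance. -/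
def dperSq (μ ρ : Measure S1) : ℝ≥0∞ :=
  ⨅ (γ : Measure (S1 × S1)) (_ : IsCoupling γ μ ρ), ∫⁻ p, edist p.1 p.2 ^ 2 ∂γ

/-- The periodic 2-Wasserstein distance. -/
def dper (μ ρ : Measure S1) : ℝ := Real.sqrt (dperSq μ ρ).toReal

/-- The periodic 2-Wasserstein distance between probability measures. -/
def dperP (μ ρ : ProbabilityMeasure S1) : ℝ := dper ↑μ ↑ρ

/-- The entropy functional `𝒰[μ] = ∫ u log u` (`= +∞` if `μ` is not absolutely continuous),
encoded as `∫ (u log u + e⁻¹) - 2π e⁻¹` since `t log t + e⁻¹ ≥ 0`. -/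
def entropyF (μ : Measure S1) : EReal :=
  if μ ≪ volume then
    ((∫⁻ x, ENNReal.ofReal ((μ.rnDeriv volume x).toReal *
        Real.log (μ.rnDeriv volume x).toReal + Real.exp (-1))) : EReal)
      - ((2 * π * Real.exp (-1) : ℝ) : EReal)
  else ⊤

/-- The periodic interaction kernel `W(x) = -(1/π) log |sin(x/2)|`, `W(0) = +∞`. -/
def Wker (z : S1) : ℝ≥0∞ :=
  if z = 0 then ⊤ else ENNReal.ofReal (-(1 / π) * Real.log |Real.sin (reprIco z / 2)|)

/-- The interaction energy `F₀[μ] = ∬ W(x-y) dμ(x) dμ(y)`. -/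
def interactionF (μ : Measure S1) : ℝ≥0∞ :=
  ∫⁻ x, ∫⁻ y, Wker (x - y) ∂μ ∂μ

/-- The free energy functional `F_ν = ν 𝒰 + F₀`. -/
def freeEnergy (ν : ℝ) (μ : Measure S1) : EReal :=
  if ν = 0 then (interactionF μ : EReal)
  else (ν : EReal) * entropyF μ + (interactionF μ : EReal)

/-- Quotient map `ℝ → S¹`. -/
def toS1 (x : ℝ) : S1 := (x : S1)

/-- A 3-plan on `ℝ³` inducing a generalized geodesic from `μ₀` to `μ₁` with base `ω` in
`P(S¹) ≅ P₂(ℝ)/∼`: the projections `(P₁,P₂)` and `(P₁,P₃)` are couplings of (representatives of)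
`ω` with representatives of `μ₀` resp. `μ₁` whose Euclidean cost attains `d_per²`. -/
structure IsGenGeodesicPlan (γ : Measure (ℝ × ℝ × ℝ)) (ω μ₀ μ₁ : Measure S1) : Prop where
  prob : IsProbabilityMeasure γ
  marg1 : γ.map (fun p => toS1 p.1) = ω
  marg2 : γ.map (fun p => toS1 p.2.1) = μ₀
  marg3 : γ.map (fun p => toS1 p.2.2) = μ₁
  opt2 : ∫⁻ p, ENNReal.ofReal ((p.1 - p.2.1) ^ 2) ∂γ = dperSq ω μ₀
  opt3 : ∫⁻ p, ENNReal.ofReal ((p.1 - p.2.2) ^ 2) ∂γ = dperSq ω μ₁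

/-- The generalized geodesic `μ_t^g = ((1-t)P₂ + tP₃)_# γ`, read in `P(S¹)`. -/
def genGeo (γ : Measure (ℝ × ℝ × ℝ)) (t : ℝ) : Measure S1 :=
  γ.map fun p => toS1 ((1 - t) * p.2.1 + t * p.2.2)

/-- The Euler-scheme functional `Ψ_ν(τ,μ;ρ) = d_per²(μ,ρ)/(2τ) + F_ν[ρ]`. -/
def Psi (ν τ : ℝ) (μ ρ : Measure S1) : EReal :=
  (((dperSq μ ρ).toReal / (2 * τ) : ℝ) : EReal) + freeEnergy ν ρ

/-- `s` is a sequence produced by the Euler scheme with time step `τ` started at `μ₀`: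
each `s (k+1)` minimizes `Ψ_ν(τ, s k; ·)`. -/
def IsEulerSeq (ν τ : ℝ) (μ₀ : ProbabilityMeasure S1) (s : ℕ → ProbabilityMeasure S1) : Prop :=
  s 0 = μ₀ ∧ ∀ k : ℕ, ∀ ρ : ProbabilityMeasure S1,
    Psi ν τ ↑(s k) ↑(s (k + 1)) ≤ Psi ν τ ↑(s k) ↑ρ

/-- A curve is locally Lipschitz on `[0,∞)` for the metric `d_per`. -/
def LocLipschitzCurve (μ : ℝ → ProbabilityMeasure S1) : Prop :=
  ∀ T > (0 : ℝ), ∃ K : ℝ, ∀ s ∈ Icc (0 : ℝ) T, ∀ t ∈ Icc (0 : ℝ) T,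
    dperP (μ s) (μ t) ≤ K * |s - t|

/-- A curve is locally absolutely continuous on `[0,∞)` for the metric `d_per`. -/
def LocACurve (μ : ℝ → ProbabilityMeasure S1) : Prop :=
  ∀ T > (0 : ℝ), ∃ m : ℝ → ℝ, IntegrableOn m (Icc 0 T) ∧ (∀ r, 0 ≤ m r) ∧
    ∀ s t : ℝ, 0 ≤ s → s ≤ t → t ≤ T → dperP (μ s) (μ t) ≤ ∫ r in Icc s t, m r

/-- The evolution variational inequality for `F_ν`:
`(1/2) (d/dt) d_per²(μ(t),σ) ≤ F_ν[σ] - F_ν[μ(t)]` for a.e. `t > 0` and every `σ ∈ D(F_ν)`. -/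
def EVI (ν : ℝ) (μ : ℝ → ProbabilityMeasure S1) : Prop :=
  ∀ σ : ProbabilityMeasure S1, freeEnergy ν ↑σ < ⊤ →
    ∀ᵐ t : ℝ ∂(volume : Measure ℝ), 0 < t → ∀ d' : ℝ,
      HasDerivAt (fun r => (dperSq ↑(μ r) ↑σ).toReal) d' t →
      ((d' / 2 : ℝ) : EReal) + freeEnergy ν ↑(μ t) ≤ freeEnergy ν ↑σ

/-- `μ` is the gradient flow of `F_ν` starting at `μ₀`, in the EVI sense. -/
def IsGradientFlow (ν : ℝ) (μ₀ : ProbabilityMeasure S1) (μ : ℝ → ProbabilityMeasure S1) : Prop :=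
  μ 0 = μ₀ ∧ LocACurve μ ∧ EVI ν μ

/-- 2π-periodic `C¹` function. -/
def PerC1 (φ : ℝ → ℝ) : Prop := ContDiff ℝ 1 φ ∧ Function.Periodic φ (2 * π)

/-- 2π-periodic `C^∞` function. -/
def PerSmooth (φ : ℝ → ℝ) : Prop := ContDiff ℝ (⊤ : ℕ∞) φ ∧ Function.Periodic φ (2 * π)

/-- `cot(z/2)` on the circle, via the representative in `[-π,π)`. -/
def cotHalf (z : S1) : ℝ := Real.cos (reprIco z / 2) / Real.sin (reprIco z / 2)

/-- Integrand of the functional `L_μ`. -/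
def Lintegrand (φ : ℝ → ℝ) (p : S1 × S1) : ℝ :=
  cotHalf (p.1 - p.2) * (φ (reprIco p.1) - φ (reprIco p.2))

/-- `L_μ(φ) = ∬ cot((x-y)/2) (φ(x) - φ(y)) dμ dμ`. -/
def Lfun (φ : ℝ → ℝ) (μ : Measure S1) : ℝ :=
  ∫ x, ∫ y, Lintegrand φ (x, y) ∂μ ∂μ

/-- `limsup_{ρ→μ} (F_ν[μ] - F_ν[ρ])⁺ / d_per(μ,ρ) ≤ S`. -/
def SlopeLe (ν : ℝ) (μ : ProbabilityMeasure S1) (S : ℝ) : Prop :=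
  ∀ ε > (0 : ℝ), ∃ δ > (0 : ℝ), ∀ ρ : ProbabilityMeasure S1, dperP μ ρ < δ →
    freeEnergy ν ↑μ ≤ freeEnergy ν ↑ρ + (((S + ε) * dperP μ ρ : ℝ) : EReal)

/-- The metric slope `|∂F_ν|(μ)`. -/
def metricSlope (ν : ℝ) (μ : ProbabilityMeasure S1) : ℝ :=
  sInf {S : ℝ | 0 ≤ S ∧ SlopeLe ν μ S}

/-- Equivalence on measures on `ℝ`: equal integrals of all continuous 2π-periodic functions. -/
def PerEquivR (μ ρ : Measure ℝ) : Prop :=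
  ∀ ζ : ℝ → ℝ, Continuous ζ → Function.Periodic ζ (2 * π) →
    ∫ x, ζ x ∂μ = ∫ x, ζ x ∂ρ


namespace Stmt1Aux

/-- The representative map `S1 → ℝ` with values in `[a, a+2π)`. -/
def eIco (a : ℝ) (z : S1) : ℝ := (AddCircle.equivIco (2 * π) a z : ℝ)

lemma measurable_eIco (a : ℝ) : Measurable (eIco a) :=
  measurable_subtype_coe.comp (AddCircle.measurableEquivIco (2 * π) a).measurable

lemma measurable_toS1 : Measurable toS1 := AddCircle.measurable_mk'

lemma eIco_toS1 (a x : ℝ) : eIco a (toS1 x) = toIcoMod Real.two_pi_pos a x := by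
  simp only [eIco, toS1, AddCircle.equivIco, QuotientAddGroup.equivIcoMod_coe]

lemma eIco_toS1_of_mem {a x : ℝ} (hx : x ∈ Ico a (a + 2 * π)) : eIco a (toS1 x) = x := by
  rw [eIco_toS1, (toIcoMod_eq_self _).2 hx]

lemma ae_ne_endpoint (a b c : ℝ) :
    ∀ᵐ x ∂(volume.restrict (Ioc a b)), x ≠ c := by
  rw [ae_iff]
  refine measure_mono_null (fun x hx => ?_) (le_antisymm
    ((Measure.restrict_le_self (Set.singleton c)).trans_eq (Real.volume_singleton)) zero_le)
  exact (by simpa using hx : x = c)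

lemma toIcoMod_ae_id (a : ℝ) :
    (fun x => toIcoMod Real.two_pi_pos a x) =ᵐ[volume.restrict (Ioc a (a + 2 * π))] id := by
  filter_upwards [ae_ne_endpoint a (a + 2 * π) (a + 2 * π),
    self_mem_ae_restrict measurableSet_Ioc] with x hne hx
  exact (toIcoMod_eq_self _).2 ⟨hx.1.le, lt_of_le_of_ne hx.2 hne⟩

lemma map_toIcoMod (a b : ℝ) :
    Measure.map (fun x => toIcoMod Real.two_pi_pos a x) (volume.restrict (Ioc b (b + 2 * π)))
      = volume.restrict (Ioc a (a + 2 * π)) := by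
  have hcomp : (fun x : ℝ => toIcoMod Real.two_pi_pos a x) = eIco a ∘ toS1 := by
    funext x; rw [Function.comp_apply, eIco_toS1]
  have h1 : Measure.map toS1 (volume.restrict (Ioc b (b + 2 * π)))
      = Measure.map toS1 (volume.restrict (Ioc a (a + 2 * π))) :=
    ((AddCircle.measurePreserving_mk (2 * π) b).map_eq).trans
      ((AddCircle.measurePreserving_mk (2 * π) a).map_eq).symm
  rw [hcomp, ← Measure.map_map (measurable_eIco a) measurable_toS1, h1,
    Measure.map_map (measurable_eIco a) measurable_toS1, ← hcomp,
    Measure.map_congr (toIcoMod_ae_id a), Measure.map_id]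

lemma integrable_iff_on (U : ℝ → ℝ) (hU0 : U 0 = 0) (f : ℝ → ℝ) (a : ℝ)
    (hfs : ∀ x, x ∉ Ico a (a + 2 * π) → f x = 0) :
    Integrable (fun x => U (f x)) volume ↔
      IntegrableOn (fun x => U (f x)) (Ioc a (a + 2 * π)) volume := by
  have heq : (fun x => U (f x)) = (Ico a (a + 2 * π)).indicator fun x => U (f x) := by
    funext x
    by_cases hx : x ∈ Ico a (a + 2 * π)
    · simp [hx]
    · simp [Set.indicator_apply, hx, hfs x hx, hU0]
  constructor
  · intro h1; exact h1.integrableOn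
  · intro h1
    rw [heq, integrable_indicator_iff measurableSet_Ico, IntegrableOn,
      Measure.restrict_congr_set Ico_ae_eq_Ioc]
    exact h1

lemma map_toS1_eq (f : ℝ → ℝ) (a : ℝ)
    (hfs : ∀ x, x ∉ Ico a (a + 2 * π) → f x = 0) :
    (volume.withDensity fun x => ENNReal.ofReal (f x)).map toS1
      = volume.withDensity fun z : S1 => ENNReal.ofReal (f (eIco a z)) := by
  ext s hs
  rw [Measure.map_apply measurable_toS1 hs,
    withDensity_apply _ (measurable_toS1 hs), withDensity_apply _ hs]
  have key := AddCircle.lintegral_preimage (2 * π) a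
    (s.indicator fun z => ENNReal.ofReal (f (eIco a z)))
  calc ∫⁻ x in toS1 ⁻¹' s, ENNReal.ofReal (f x) ∂volume
      = ∫⁻ x, (toS1 ⁻¹' s).indicator (fun x => ENNReal.ofReal (f x)) x :=
        (lintegral_indicator (measurable_toS1 hs) _).symm
    _ = ∫⁻ x in Ico a (a + 2 * π), (toS1 ⁻¹' s).indicator (fun x => ENNReal.ofReal (f x)) x := by
        rw [← lintegral_indicator measurableSet_Ico _]
        congr 1
        funext x
        by_cases hx : x ∈ Ico a (a + 2 * π)
        · simp [hx]
        · simp [Set.indicator_apply, hx, hfs x hx]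
    _ = ∫⁻ x in Ico a (a + 2 * π),
          s.indicator (fun z : S1 => ENNReal.ofReal (f (eIco a z))) (toS1 x) := by
        refine setLIntegral_congr_fun measurableSet_Ico (fun x hx => ?_)
        by_cases hxs : toS1 x ∈ s
        · simp [Set.indicator_apply, hxs, eIco_toS1_of_mem hx]
        · simp [Set.indicator_apply, hxs]
    _ = ∫⁻ x in Ioc a (a + 2 * π),
          s.indicator (fun z : S1 => ENNReal.ofReal (f (eIco a z))) (toS1 x) :=
        setLIntegral_congr Ico_ae_eq_Ioc
    _ = ∫⁻ z, s.indicator (fun z : S1 => ENNReal.ofReal (f (eIco a z))) z := key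
    _ = ∫⁻ z in s, ENNReal.ofReal (f (eIco a z)) ∂volume := lintegral_indicator hs _

lemma map_toS1_congr {μ ρ : Measure ℝ}
    (hμp : IsProbabilityMeasure μ) (hρp : IsProbabilityMeasure ρ)
    (hequiv : PerEquivR μ ρ) : μ.map toS1 = ρ.map toS1 := by
  haveI : IsProbabilityMeasure (μ.map toS1) :=
    Measure.isProbabilityMeasure_map measurable_toS1.aemeasurable
  refine ext_of_forall_lintegral_eq_of_IsFiniteMeasure fun φ => ?_
  have hcont : Continuous fun x : ℝ => (φ (toS1 x) : ℝ) :=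
    NNReal.continuous_coe.comp (φ.continuous.comp (AddCircle.continuous_mk' _))
  have hper : Function.Periodic (fun x : ℝ => (φ (toS1 x) : ℝ)) (2 * π) := fun x => by
    simp only [toS1, AddCircle.coe_add_period]
  have hint : ∀ ν : Measure ℝ, IsProbabilityMeasure ν →
      Integrable (fun x => (φ (toS1 x) : ℝ)) ν := by
    intro ν hν
    obtain ⟨C, hC⟩ := φ.bounded
    refine Integrable.mono' (integrable_const ((φ (toS1 0) : ℝ) + C))
      hcont.aestronglyMeasurable (ae_of_all _ fun x => ?_)
    have h1 := hC (toS1 x) (toS1 0)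
    rw [NNReal.dist_eq] at h1
    have h2 : ((φ (toS1 x) : ℝ)) - (φ (toS1 0) : ℝ) ≤ C := (abs_le.1 h1).2
    rw [Real.norm_of_nonneg (φ (toS1 x)).coe_nonneg]
    linarith
  rw [lintegral_map φ.continuous.measurable.coe_nnreal_ennreal measurable_toS1,
    lintegral_map φ.continuous.measurable.coe_nnreal_ennreal measurable_toS1,
    lintegral_coe_eq_integral _ (hint μ hμp), lintegral_coe_eq_integral _ (hint ρ hρp),
    hequiv _ hcont hper]

lemma density_ae_real (f h : ℝ → ℝ) (a b : ℝ)
    (hfm : Measurable f) (hhm : Measurable h) (hf0 : ∀ x, 0 ≤ f x) (hh0 : ∀ x, 0 ≤ h x)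
    (hfs : ∀ x, x ∉ Ico a (a + 2 * π) → f x = 0)
    (hhs : ∀ x, x ∉ Ico b (b + 2 * π) → h x = 0)
    (hμp : IsProbabilityMeasure (volume.withDensity fun x => ENNReal.ofReal (f x)))
    (hρp : IsProbabilityMeasure (volume.withDensity fun x => ENNReal.ofReal (h x)))
    (hequiv : PerEquivR (volume.withDensity fun x => ENNReal.ofReal (f x))
        (volume.withDensity fun x => ENNReal.ofReal (h x))) :
    (fun x => h x) =ᵐ[volume.restrict (Ioc b (b + 2 * π))]
      fun x => f (toIcoMod Real.two_pi_pos a x) := by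
  have h4 : volume.withDensity (fun z : S1 => ENNReal.ofReal (f (eIco a z)))
      = volume.withDensity fun z : S1 => ENNReal.ofReal (h (eIco b z)) := by
    rw [← map_toS1_eq f a hfs, ← map_toS1_eq h b hhs, map_toS1_congr hμp hρp hequiv]
  have h5 : (fun z : S1 => ENNReal.ofReal (f (eIco a z)))
      =ᵐ[volume] fun z : S1 => ENNReal.ofReal (h (eIco b z)) :=
    (withDensity_eq_iff_of_sigmaFinite
      ((hfm.comp (measurable_eIco a)).ennreal_ofReal).aemeasurable
      ((hhm.comp (measurable_eIco b)).ennreal_ofReal).aemeasurable).mp h4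
  have h6 : (fun z : S1 => f (eIco a z)) =ᵐ[volume] fun z : S1 => h (eIco b z) := by
    filter_upwards [h5] with z hz
    exact (ENNReal.ofReal_eq_ofReal_iff (hf0 _) (hh0 _)).mp hz
  have h7 : ((fun z : S1 => f (eIco a z)) ∘ toS1)
      =ᵐ[volume.restrict (Ioc b (b + 2 * π))] ((fun z : S1 => h (eIco b z)) ∘ toS1) := by
    refine ae_eq_comp measurable_toS1.aemeasurable ?_
    rwa [show Measure.map toS1 (volume.restrict (Ioc b (b + 2 * π))) = volume from
      (AddCircle.measurePreserving_mk (2 * π) b).map_eq]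
  filter_upwards [h7, ae_ne_endpoint b (b + 2 * π) (b + 2 * π),
    self_mem_ae_restrict measurableSet_Ioc] with x hx hne hmem
  have hb : x ∈ Ico b (b + 2 * π) := ⟨hmem.1.le, lt_of_le_of_ne hmem.2 hne⟩
  simp only [Function.comp_apply, eIco_toS1 a x, eIco_toS1_of_mem hb] at hx
  exact hx.symm

end Stmt1Aux

/-- Invariance of internal-energy integrals under the periodic equivalence:
if `μ = f dx ∼ ρ = h dx` are probability measures with finite second moments supported in
`[a, a+2π)` resp. `[b, b+2π)` and `U(0) = 0`, then `U∘f ∈ L¹ ↔ U∘h ∈ L¹` and the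
corresponding integrals coincide. -/
theorem stmt1 (U : ℝ → ℝ) (hU0 : U 0 = 0) (a b : ℝ) (f h : ℝ → ℝ)
    (hfm : Measurable f) (hhm : Measurable h) (hf0 : ∀ x, 0 ≤ f x) (hh0 : ∀ x, 0 ≤ h x)
    (hfs : ∀ x, x ∉ Ico a (a + 2 * π) → f x = 0)
    (hhs : ∀ x, x ∉ Ico b (b + 2 * π) → h x = 0)
    (hμp : IsProbabilityMeasure (volume.withDensity fun x => ENNReal.ofReal (f x)))
    (hρp : IsProbabilityMeasure (volume.withDensity fun x => ENNReal.ofReal (h x)))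
    (hμ2 : ∫⁻ x, ENNReal.ofReal (x ^ 2)
        ∂(volume.withDensity fun x => ENNReal.ofReal (f x)) < ⊤)
    (hρ2 : ∫⁻ x, ENNReal.ofReal (x ^ 2)
        ∂(volume.withDensity fun x => ENNReal.ofReal (h x)) < ⊤)
    (hequiv : PerEquivR (volume.withDensity fun x => ENNReal.ofReal (f x))
        (volume.withDensity fun x => ENNReal.ofReal (h x))) :
    (Integrable (fun x => U (f x)) volume ↔ Integrable (fun x => U (h x)) volume) ∧
      (Integrable (fun x => U (f x)) volume →
        ∫ x in Ico a (a + 2 * π), U (f x) = ∫ x in Ico b (b + 2 * π), U (h x)) := by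
  open Stmt1Aux in
  have star1 := density_ae_real f h a b hfm hhm hf0 hh0 hfs hhs hμp hρp hequiv
  have star2 := density_ae_real h f b a hhm hfm hh0 hf0 hhs hfs hρp hμp
    (fun ζ hc hp => (hequiv ζ hc hp).symm)
  have hTmeas : ∀ c : ℝ, Measurable fun x => toIcoMod Real.two_pi_pos c x := by
    intro c
    have hc : (fun x : ℝ => toIcoMod Real.two_pi_pos c x) = eIco c ∘ toS1 := by
      funext x; rw [Function.comp_apply, eIco_toS1]
    rw [hc]; exact (measurable_eIco c).comp measurable_toS1
  have hmp : ∀ c d : ℝ, MeasurePreserving (fun x => toIcoMod Real.two_pi_pos c x)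
      (volume.restrict (Ioc d (d + 2 * π))) (volume.restrict (Ioc c (c + 2 * π))) :=
    fun c d => ⟨hTmeas c, map_toIcoMod c d⟩
  have dir : ∀ (f h : ℝ → ℝ) (a b : ℝ),
      (∀ x, x ∉ Ico a (a + 2 * π) → f x = 0) → (∀ x, x ∉ Ico b (b + 2 * π) → h x = 0) →
      ((fun x => h x) =ᵐ[volume.restrict (Ioc b (b + 2 * π))]
        fun x => f (toIcoMod Real.two_pi_pos a x)) →
      Integrable (fun x => U (f x)) volume → Integrable (fun x => U (h x)) volume := by
    intro f h a b hfs hhs hae h1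
    rw [integrable_iff_on U hU0 h b hhs]
    have h2 : IntegrableOn (fun x => U (f x)) (Ioc a (a + 2 * π)) volume :=
      (integrable_iff_on U hU0 f a hfs).1 h1
    have h3 : Integrable ((fun x => U (f x)) ∘ fun x => toIcoMod Real.two_pi_pos a x)
        (volume.restrict (Ioc b (b + 2 * π))) :=
      ((hmp a b).integrable_comp h2.1).2 h2
    exact h3.congr ((hae.fun_comp U).symm)
  refine ⟨⟨dir f h a b hfs hhs star1, dir h f b a hhs hfs star2⟩, ?_⟩
  intro h1
  have h2 : IntegrableOn (fun x => U (f x)) (Ioc a (a + 2 * π)) volume :=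
    (integrable_iff_on U hU0 f a hfs).1 h1
  calc ∫ x in Ico a (a + 2 * π), U (f x)
      = ∫ x in Ioc a (a + 2 * π), U (f x) := setIntegral_congr_set Ico_ae_eq_Ioc
    _ = ∫ x in Ioc b (b + 2 * π), U (f (toIcoMod Real.two_pi_pos a x)) := by
        rw [← map_toIcoMod a b]
        exact integral_map (hTmeas a).aemeasurable ((map_toIcoMod a b).symm ▸ h2.1)
    _ = ∫ x in Ioc b (b + 2 * π), U (h x) := integral_congr_ae ((star1.fun_comp U).symm)
    _ = ∫ x in Ico b (b + 2 * π), U (h x) := (setIntegral_congr_set Ico_ae_eq_Ioc).symm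
end
end

section
/- Let s = log 2 / log 3, let C ⊂ [−π, π] be the Cantor ternary set in [−π, π] (the image of the standard ternary Cantor set in [0,1] under the increasing affine map from [0,1] onto [−π,π]), and let H^s denote the s-dimensional Hausdorff measure on ℝ. Then 0 < H^s(C) < ∞, the measure μ^s defined by μ^s(A) = H^s(A ∩ C)/H^s(C) for Lebesgue measurable A is a probability measure on S¹ ≅ [−π,π) that is singular with respect to Lebesgue measure, and F₀[μ^s] = ∬_{[−π,π)²} W(x−y) dμ^s(x) dμ^s(y) < ∞. -/
open MeasureTheory Filter Real Set Topology
open scoped ENNReal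

noncomputable section

attribute [local instance] Classical.propDecidable

/-- The Cantor ternary set in `[-π, π]`: the image of the standard ternary Cantor set in `[0,1]`
under the increasing affine map from `[0,1]` onto `[-π,π]`. -/
def cantorPi : Set ℝ := (fun x : ℝ => 2 * π * x - π) '' cantorSet

namespace Stmt2Aux

def sig : ℝ := Real.log 2 / Real.log 3

lemma log3_pos : (0:ℝ) < Real.log 3 := Real.log_pos (by norm_num)
lemma sig_pos : 0 < sig := div_pos (Real.log_pos (by norm_num)) log3_pos
lemma sig_nonneg : 0 ≤ sig := sig_pos.le
lemma sig_le_one : sig ≤ 1 := by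
  rw [sig, div_le_one log3_pos]
  exact Real.log_le_log (by norm_num) (by norm_num)

lemma three_rpow_sig : (3:ℝ) ^ sig = 2 := by
  rw [sig, Real.rpow_def_of_pos (by norm_num : (0:ℝ) < 3), mul_comm,
    div_mul_cancel₀ _ log3_pos.ne']
  exact Real.exp_log (by norm_num)

lemma third_rpow_sig : ((1/3 : ℝ)) ^ sig = 1/2 := by
  rw [one_div, one_div, Real.inv_rpow (by norm_num : (0:ℝ) ≤ 3), three_rpow_sig]

lemma third_pow_rpow_sig (n : ℕ) : (((1/3:ℝ)) ^ n) ^ sig = (1/2:ℝ) ^ n := by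
  rw [← Real.rpow_natCast (1/3 : ℝ) n, ← Real.rpow_mul (by norm_num), mul_comm,
    Real.rpow_mul (by norm_num), third_rpow_sig, Real.rpow_natCast]

lemma ofReal_half : ENNReal.ofReal (1/2) = 2⁻¹ := by
  rw [one_div, ENNReal.ofReal_inv_of_pos (by norm_num)]
  norm_num

lemma enn_third_rpow (n : ℕ) : (ENNReal.ofReal ((1/3:ℝ)^n)) ^ sig = 2⁻¹ ^ n := by
  rw [ENNReal.ofReal_rpow_of_pos (by positivity : (0:ℝ) < (1/3:ℝ)^n), third_pow_rpow_sig,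
    ← ofReal_half, ← ENNReal.ofReal_pow (by norm_num)]

/-! ## Word machinery for the ternary Cantor set -/

def fm (b : Bool) (x : ℝ) : ℝ := ((cond b 2 0) + x) / 3

def IW : List Bool → Set ℝ
  | [] => Icc 0 1
  | b :: w => fm b '' IW w

lemma IW_subset_unit (w : List Bool) : IW w ⊆ Icc 0 1 := by
  induction w with
  | nil => exact le_refl _
  | cons b w ih =>
    rintro x ⟨y, hy, rfl⟩
    have h := ih hy
    cases b <;> (simp only [fm, cond]; constructor) <;> nlinarith [h.1, h.2]

def aW : List Bool → ℝ
  | [] => 0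
  | b :: w => ((cond b 2 0) + aW w) / 3

lemma IW_eq_Icc (w : List Bool) : IW w = Icc (aW w) (aW w + (1/3)^w.length) := by
  induction w with
  | nil => simp [IW, aW]
  | cons b w ih =>
    have h3 : (0:ℝ) < 1/3 := by norm_num
    simp only [IW, ih, aW, List.length_cons]
    have hfm : fm b = (fun x : ℝ => x + (cond b 2 0)/3) ∘ (fun x : ℝ => x * (1/3)) := by
      funext x; simp [fm]; ring
    rw [hfm, image_comp, image_mul_right_Icc' _ _ h3, image_add_const_Icc]
    congr 1 <;> ring

lemma ediam_IW (w : List Bool) :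
    EMetric.diam (IW w) = ENNReal.ofReal ((1/3)^w.length) := by
  rw [IW_eq_Icc, EMetric.diam, Real.ediam_Icc]
  congr 1; ring

lemma IW_append_subset (w v : List Bool) : IW (w ++ v) ⊆ IW w := by
  induction w with
  | nil => simpa [IW] using IW_subset_unit v
  | cons b w ih => exact image_mono ih

lemma IW_sep : ∀ w w' : List Bool, w.length = w'.length → w ≠ w' →
    ∀ x ∈ IW w, ∀ y ∈ IW w', (1/3:ℝ)^w.length ≤ |x - y| := by
  intro w
  induction w with
  | nil => intro w' hl hne; cases w' <;> simp_all
  | cons b w ih =>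
    intro w' hl hne x hx y hy
    cases w' with
    | nil => simp at hl
    | cons b' w'' =>
      obtain ⟨x', hx', rfl⟩ := hx
      obtain ⟨y', hy', rfl⟩ := hy
      by_cases hb : b = b'
      · subst hb
        have hne' : w ≠ w'' := fun h => hne (by rw [h])
        have hl' : w.length = w''.length := by simpa using hl
        have := ih w'' hl' hne' x' hx' y' hy'
        have hd : fm b x' - fm b y' = (x' - y') / 3 := by simp [fm]; ring
        have habs : |fm b x' - fm b y'| = |x' - y'| / 3 := by
          rw [hd, abs_div, abs_of_pos (by norm_num : (0:ℝ) < 3)]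
        rw [habs, List.length_cons, pow_succ]
        have h3 : (0:ℝ) < 3 := by norm_num
        calc (1/3:ℝ)^w.length * (1/3) ≤ |x' - y'| * (1/3) := by
              apply mul_le_mul_of_nonneg_right this (by norm_num)
          _ = |x' - y'| / 3 := by ring
      · -- different first letters: intervals [0,1/3] and [2/3,1]
        have hx1 := IW_subset_unit w hx'
        have hy1 := IW_subset_unit w'' hy'
        have key : ∀ u v : ℝ, u ∈ Icc (0:ℝ) 1 → v ∈ Icc (0:ℝ) 1 →
            (1/3:ℝ)^(w.length + 1) ≤ |fm false u - fm true v| := by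
          intro u v hu hv
          have h1 : fm false u ≤ 1/3 := by simp only [fm, cond]; nlinarith [hu.2]
          have h2 : (2/3 : ℝ) ≤ fm true v := by simp only [fm, cond]; nlinarith [hv.1]
          have h13 : (1/3:ℝ)^(w.length+1) ≤ 1/3 := by
            calc (1/3:ℝ)^(w.length+1) ≤ (1/3)^1 :=
                  pow_le_pow_of_le_one (by norm_num) (by norm_num) (by omega)
              _ = 1/3 := by norm_num
          rw [abs_sub_comm, abs_of_nonneg (by linarith)]
          linarith
        rw [List.length_cons]
        cases b <;> cases b' <;> first
          | exact absurd rfl hb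
          | exact key x' y' hx1 hy1
          | (rw [abs_sub_comm]; exact key y' x' hy1 hx1)

lemma preCantor_eq (n : ℕ) :
    preCantorSet n = ⋃ v : Fin n → Bool, IW (List.ofFn v) := by
  induction n with
  | zero =>
    ext x
    simp only [preCantorSet_zero, mem_iUnion]
    constructor
    · intro h; exact ⟨fun i => false, by simpa [List.ofFn_zero, IW] using h⟩
    · rintro ⟨v, hv⟩; simpa [List.ofFn_zero, IW] using hv
  | succ n ih =>
    ext x
    simp only [preCantorSet_succ, ih, mem_union, mem_iUnion, mem_image]
    constructor
    · rintro (⟨y, ⟨v, hv⟩, rfl⟩ | ⟨y, ⟨v, hv⟩, rfl⟩)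
      · refine ⟨Fin.cons false v, ?_⟩
        have hofn : List.ofFn (Fin.cons false v) = false :: List.ofFn v := by
          rw [List.ofFn_succ]; simp
        rw [hofn]
        simp only [IW, mem_image]
        exact ⟨y, hv, by simp [fm]⟩
      · refine ⟨Fin.cons true v, ?_⟩
        have hofn : List.ofFn (Fin.cons true v) = true :: List.ofFn v := by
          rw [List.ofFn_succ]; simp
        rw [hofn]
        simp only [IW, mem_image]
        exact ⟨y, hv, by simp [fm]⟩
    · rintro ⟨v, hv⟩
      rw [List.ofFn_succ] at hv
      obtain ⟨y, hy, rfl⟩ := hv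
      rcases Bool.dichotomy (v 0) with h0 | h0 <;> rw [h0]
      · exact Or.inl ⟨y, ⟨_, hy⟩, by simp [fm]⟩
      · exact Or.inr ⟨y, ⟨_, hy⟩, by simp [fm]⟩

lemma list_eq_ofFn {m : ℕ} (L : List Bool) (h : L.length = m) :
    ∃ v : Fin m → Bool, List.ofFn v = L := by
  refine ⟨fun i => L.get (Fin.cast h.symm i), ?_⟩
  apply List.ext_get (by simp [h])
  intro i h1 h2
  simp [List.get_ofFn]

lemma cantor_subset_piece {n : ℕ} {x : ℝ} (hx : x ∈ cantorSet) {w : List Bool}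
    (hw : w.length = n) (hxw : x ∈ IW w) (m : ℕ) :
    ∃ v : Fin m → Bool, x ∈ IW (w ++ List.ofFn v) := by
  have hxp : x ∈ preCantorSet (n + m) := Set.mem_iInter.mp hx (n + m)
  rw [preCantor_eq] at hxp
  obtain ⟨u, hu⟩ := Set.mem_iUnion.mp hxp
  set L := List.ofFn u with hL
  have hLlen : L.length = n + m := by simp [hL]
  have hsplit : L.take n ++ L.drop n = L := List.take_append_drop n L
  have htlen : (L.take n).length = n := by
    rw [List.length_take, hLlen]; omega
  have hxtake : x ∈ IW (L.take n) := by
    rw [← hsplit] at hu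
    exact IW_append_subset _ _ hu
  have htake_eq : L.take n = w := by
    by_contra hne
    have h1 := IW_sep (L.take n) w (by rw [htlen, hw]) hne x hxtake x hxw
    simp only [sub_self, abs_zero] at h1
    have h2 : (0:ℝ) < (1/3)^(L.take n).length := by positivity
    linarith
  have hdlen : (L.drop n).length = m := by rw [List.length_drop, hLlen]; omega
  obtain ⟨v, hv⟩ := list_eq_ofFn (L.drop n) hdlen
  refine ⟨v, ?_⟩
  rw [hv, ← htake_eq, hsplit]
  exact hu

/-- Hausdorff measure of the part of the Cantor set in a level-`n` piece. -/
lemma Hsub (w : List Bool) : μH[sig] (cantorSet ∩ IW w) ≤ 2⁻¹ ^ w.length := by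
  set n := w.length with hn
  have hcover : ∀ m : ℕ, cantorSet ∩ IW w ⊆ ⋃ v : Fin m → Bool, IW (w ++ List.ofFn v) := by
    intro m x ⟨hx, hxw⟩
    obtain ⟨v, hv⟩ := cantor_subset_piece hx hn.symm hxw m
    exact Set.mem_iUnion.mpr ⟨v, hv⟩
  have hdiam : ∀ m : ℕ, ∀ v : Fin m → Bool,
      EMetric.diam (IW (w ++ List.ofFn v)) = ENNReal.ofReal ((1/3)^(n + m)) := by
    intro m v
    rw [ediam_IW]
    congr 2
    simp [hn]
  have hle := MeasureTheory.Measure.hausdorffMeasure_le_liminf_sum sig (cantorSet ∩ IW w)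
    (l := Filter.atTop) (fun m => ENNReal.ofReal ((1/3)^(n + m)))
    (by
      have hr : Filter.Tendsto (fun m : ℕ => (1/3:ℝ)^(n+m)) Filter.atTop (nhds 0) := by
        simpa [pow_add] using (tendsto_pow_atTop_nhds_zero_of_lt_one
          (by norm_num : (0:ℝ) ≤ 1/3) (by norm_num)).const_mul ((1/3:ℝ)^n)
      rw [← ENNReal.ofReal_zero]
      exact ENNReal.tendsto_ofReal hr)
    (fun m v => IW (w ++ List.ofFn v))
    (Filter.Eventually.of_forall fun m => fun v => (hdiam m v).le)
    (Filter.Eventually.of_forall hcover)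
  refine hle.trans ?_
  have hsum : ∀ m : ℕ, (∑ v : Fin m → Bool,
      EMetric.diam (IW (w ++ List.ofFn v)) ^ sig) = 2⁻¹ ^ n := by
    intro m
    have : ∀ v : Fin m → Bool, EMetric.diam (IW (w ++ List.ofFn v)) ^ sig
        = 2⁻¹ ^ (n + m) := by
      intro v; rw [hdiam m v, enn_third_rpow]
    rw [Finset.sum_congr rfl (fun v _ => this v), Finset.sum_const]
    have hcard : (Finset.univ : Finset (Fin m → Bool)).card = 2 ^ m := by
      simp [Finset.card_univ]
    rw [hcard, nsmul_eq_mul, pow_add]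
    have h2m : ((2:ℝ≥0∞) ^ m) * (2⁻¹ : ℝ≥0∞) ^ m = 1 := by
      rw [← mul_pow, ENNReal.mul_inv_cancel (by norm_num) (by norm_num), one_pow]
    push_cast
    calc (2:ℝ≥0∞)^m * (2⁻¹^n * 2⁻¹^m) = (2^m * 2⁻¹^m) * 2⁻¹^n := by ring
      _ = 2⁻¹ ^ n := by rw [h2m, one_mul]
  refine le_of_eq ?_
  have heq : (fun m : ℕ => ∑ i : Fin m → Bool,
      EMetric.diam ((fun m (v : Fin m → Bool) => IW (w ++ List.ofFn v)) m i) ^ sig)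
      = fun _ : ℕ => (2:ℝ≥0∞)⁻¹ ^ n := funext fun m => hsum m
  simp only [EMetric.diam] at heq
  rw [heq, Filter.liminf_const]

lemma Hsmall {A : Set ℝ} {n : ℕ} (hA : EMetric.diam A < ENNReal.ofReal ((1/3)^n)) :
    μH[sig] (cantorSet ∩ A) ≤ 2⁻¹ ^ n := by
  rcases Set.eq_empty_or_nonempty (cantorSet ∩ A) with h | ⟨x0, hx0C, hx0A⟩
  · rw [h]; simp
  · have hx0p : x0 ∈ preCantorSet n := Set.mem_iInter.mp hx0C n
    rw [preCantor_eq] at hx0p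
    obtain ⟨v, hv⟩ := Set.mem_iUnion.mp hx0p
    set w := List.ofFn v with hw
    have hwlen : w.length = n := by simp [hw]
    have hsub : cantorSet ∩ A ⊆ cantorSet ∩ IW w := by
      rintro x ⟨hxC, hxA⟩
      refine ⟨hxC, ?_⟩
      have hxp : x ∈ preCantorSet n := Set.mem_iInter.mp hxC n
      rw [preCantor_eq] at hxp
      obtain ⟨v', hv'⟩ := Set.mem_iUnion.mp hxp
      by_cases he : List.ofFn v' = w
      · rwa [he] at hv'
      · exfalso
        have hsep := IW_sep (List.ofFn v') w (by simp [hw]) he x hv' x0 hv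
        have hlen' : (List.ofFn v').length = n := by simp
        rw [hlen'] at hsep
        have hedist : edist x x0 < ENNReal.ofReal ((1/3)^n) :=
          lt_of_le_of_lt (EMetric.edist_le_diam_of_mem hxA hx0A) hA
        rw [edist_dist, Real.dist_eq] at hedist
        have := ENNReal.ofReal_le_ofReal hsep
        exact absurd (this.trans_lt hedist) (lt_irrefl _)
    calc μH[sig] (cantorSet ∩ A) ≤ μH[sig] (cantorSet ∩ IW w) := measure_mono hsub
      _ ≤ 2⁻¹ ^ n := hwlen ▸ Hsub w

lemma Hcantor_le_one : μH[sig] cantorSet ≤ 1 := by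
  have h := Hsub []
  simpa [IW, Set.inter_eq_left.mpr cantorSet_subset_unitInterval] using h

/-! ## The Cantor (coin-flipping) measure via Haar measure on `ℕ → ZMod 2` -/

abbrev Gsp : Type := ℕ → ZMod 2

def K0 : TopologicalSpace.PositiveCompacts Gsp := ⟨⟨univ, isCompact_univ⟩, by simp⟩

def haG : Measure Gsp := Measure.addHaarMeasure K0

instance : haG.IsAddLeftInvariant := by unfold haG; infer_instance

lemma haG_univ : haG univ = 1 := by
  have := Measure.addHaarMeasure_self (K₀ := K0)
  simpa [haG, K0] using this

instance : IsProbabilityMeasure haG := ⟨haG_univ⟩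

def cyl (n : ℕ) (c : Gsp) : Set Gsp := {ω | ∀ i < n, ω i = c i}

lemma cyl_measurable (n : ℕ) (c : Gsp) : MeasurableSet (cyl n c) := by
  have : cyl n c = ⋂ i ∈ Finset.range n, (fun ω : Gsp => ω i) ⁻¹' {c i} := by
    ext ω; simp [cyl]
  rw [this]
  exact MeasurableSet.biInter (Finset.range n).countable_toSet
    (fun i _ => (measurable_pi_apply i) (measurableSet_singleton _))

lemma haG_cyl_eq (n : ℕ) (c : Gsp) : haG (cyl n c) = haG (cyl n 0) := by
  have : (fun ω : Gsp => ω + c) ⁻¹' (cyl n c) = cyl n 0 := by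
    ext ω
    simp only [cyl, mem_preimage, mem_setOf_eq, Pi.add_apply, Pi.zero_apply]
    constructor
    · intro h i hi
      have h2 : ω i + c i = 0 + c i := by rw [h i hi, zero_add]
      exact add_right_cancel h2
    · intro h i hi; rw [h i hi, zero_add]
  calc haG (cyl n c) = haG ((fun ω : Gsp => ω + c) ⁻¹' (cyl n c)) := by
        rw [measure_preimage_add_right]
    _ = haG (cyl n 0) := by rw [this]

lemma haG_cyl (n : ℕ) (c : Gsp) : haG (cyl n c) = 2⁻¹ ^ n := by
  -- the 2^n cylinders of depth n partition the space
  classical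
  -- extension map
  let ext : (Fin n → ZMod 2) → Gsp := fun v i => if h : i < n then v ⟨i, h⟩ else 0
  have hcover : (univ : Set Gsp) = ⋃ v : Fin n → ZMod 2, cyl n (ext v) := by
    ext ω
    simp only [mem_univ, true_iff, mem_iUnion]
    exact ⟨fun i => ω i, fun i hi => by simp [ext, hi]⟩
  have hdisj : Pairwise (Function.onFun Disjoint (fun v : Fin n → ZMod 2 => cyl n (ext v))) := by
    intro v v' hvv'
    rw [Function.onFun, Set.disjoint_left]
    intro ω hω hω'
    apply hvv'
    funext i
    have h1 := hω i.1 i.2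
    have h2 := hω' i.1 i.2
    have : ext v i.1 = ext v' i.1 := by rw [← h1, h2]
    simpa [ext, i.2] using this
  have hsum : ∑' v : Fin n → ZMod 2, haG (cyl n (ext v)) = 1 := by
    rw [← measure_iUnion hdisj (fun v => cyl_measurable n (ext v)), ← hcover, haG_univ]
  have hconst : ∀ v : Fin n → ZMod 2, haG (cyl n (ext v)) = haG (cyl n 0) :=
    fun v => haG_cyl_eq n (ext v)
  rw [tsum_congr hconst, tsum_fintype, Finset.sum_const] at hsum
  have hcard : (Finset.univ : Finset (Fin n → ZMod 2)).card = 2 ^ n := by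
    simp [Finset.card_univ]
  rw [hcard, nsmul_eq_mul] at hsum
  have h0 : haG (cyl n 0) = 2⁻¹ ^ n := by
    have h2 : ((2:ℝ≥0∞) ^ n) ≠ 0 := by positivity
    have h2' : ((2:ℝ≥0∞) ^ n) ≠ ⊤ := by
      exact ENNReal.pow_ne_top (by norm_num)
    rw [← ENNReal.eq_div_iff (by exact_mod_cast h2) (by exact_mod_cast h2')] at hsum
    rw [hsum]
    rw [ENNReal.div_eq_inv_mul, mul_one, ← ENNReal.inv_pow]
    norm_num
  rw [haG_cyl_eq n c, h0]

/-! ## The digit map to the Cantor set -/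

def tdig (ω : Gsp) (i : ℕ) : ℝ := 2 * ((ω i).val : ℝ) / 3^(i+1)

lemma zmod2_val_le_one (z : ZMod 2) : (z.val : ℝ) ≤ 1 := by
  have : z.val < 2 := ZMod.val_lt z
  exact_mod_cast Nat.lt_succ_iff.mp this

lemma tdig_nonneg (ω : Gsp) (i : ℕ) : 0 ≤ tdig ω i := by
  unfold tdig; positivity

lemma tdig_le (ω : Gsp) (i : ℕ) : tdig ω i ≤ 2/3^(i+1) := by
  unfold tdig
  have h := zmod2_val_le_one (ω i)
  have h3 : (0:ℝ) < 3^(i+1) := by positivity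
  rw [div_le_div_iff_of_pos_right h3]
  linarith

lemma summable_bound : Summable (fun i : ℕ => (2:ℝ)/3^(i+1)) := by
  have : (fun i : ℕ => (2:ℝ)/3^(i+1)) = fun i => (2/3) * (1/3)^i := by
    funext i; rw [pow_succ, div_pow, one_pow]; ring
  rw [this]
  exact (summable_geometric_of_lt_one (by norm_num) (by norm_num)).mul_left _

lemma tsum_bound : ∑' i : ℕ, (2:ℝ)/3^(i+1) = 1 := by
  have h : (fun i : ℕ => (2:ℝ)/3^(i+1)) = fun i => (2/3) * (1/3)^i := by
    funext i; rw [pow_succ, div_pow, one_pow]; ring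
  rw [h, tsum_mul_left, tsum_geometric_of_lt_one (by norm_num) (by norm_num)]
  norm_num

lemma summable_tdig (ω : Gsp) : Summable (tdig ω) :=
  Summable.of_nonneg_of_le (tdig_nonneg ω) (tdig_le ω) summable_bound

def gmap (ω : Gsp) : ℝ := ∑' i, tdig ω i

lemma gmap_nonneg (ω : Gsp) : 0 ≤ gmap ω := tsum_nonneg (tdig_nonneg ω)

lemma gmap_le_one (ω : Gsp) : gmap ω ≤ 1 :=
  (Summable.tsum_le_tsum (tdig_le ω) (summable_tdig ω) summable_bound).trans_eq tsum_bound

lemma gmap_rec (ω : Gsp) :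
    gmap ω = (2 * ((ω 0).val : ℝ) + gmap (fun i => ω (i+1))) / 3 := by
  have h := Summable.tsum_eq_zero_add (summable_tdig ω)
  have htail : ∑' i : ℕ, tdig ω (i+1) = (1/3) * gmap (fun i => ω (i+1)) := by
    rw [gmap, ← tsum_mul_left]
    congr 1
    funext i
    unfold tdig
    rw [pow_succ]
    ring
  rw [gmap, h, htail]
  unfold tdig
  ring

lemma gmap_mem_preCantor : ∀ n : ℕ, ∀ ω : Gsp, gmap ω ∈ preCantorSet n := by
  intro n
  induction n with
  | zero => exact fun ω => ⟨gmap_nonneg ω, gmap_le_one ω⟩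
  | succ n ih =>
    intro ω
    have hz : ω 0 = 0 ∨ ω 0 = 1 := by
      have : ∀ z : ZMod 2, z = 0 ∨ z = 1 := by decide
      exact this (ω 0)
    rcases hz with h0 | h0
    · left
      refine ⟨gmap (fun i => ω (i+1)), ih _, ?_⟩
      rw [gmap_rec ω, h0]
      norm_num [ZMod.val_zero]
    · right
      refine ⟨gmap (fun i => ω (i+1)), ih _, ?_⟩
      rw [gmap_rec ω, h0]
      norm_num [ZMod.val_one]

lemma gmap_mem_cantor (ω : Gsp) : gmap ω ∈ cantorSet :=
  Set.mem_iInter.mpr (fun n => gmap_mem_preCantor n ω)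

lemma gmap_continuous : Continuous gmap := by
  apply continuous_tsum (u := fun i : ℕ => (2:ℝ)/3^(i+1))
  · intro i
    have : Continuous (fun ω : Gsp => ω i) := continuous_apply i
    exact (continuous_of_discreteTopology (α := ZMod 2)
      (f := fun z : ZMod 2 => 2 * (z.val : ℝ) / 3^(i+1))).comp this
  · exact summable_bound
  · intro i ω
    rw [Real.norm_eq_abs, abs_of_nonneg (tdig_nonneg ω i)]
    exact tdig_le ω i

lemma gmap_measurable : Measurable gmap := gmap_continuous.measurable

lemma gmap_sep {ω ω' : Gsp} {k : ℕ} (hdiff : ω k ≠ ω' k) (hmin : ∀ i < k, ω i = ω' i) :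
    (1/3:ℝ)^(k+1) ≤ |gmap ω - gmap ω'| := by
  have hsub : gmap ω - gmap ω' = ∑' i, (tdig ω i - tdig ω' i) :=
    (Summable.tsum_sub (summable_tdig ω) (summable_tdig ω')).symm
  set f : ℕ → ℝ := fun i => tdig ω i - tdig ω' i with hf
  have hfs : Summable f := (summable_tdig ω).sub (summable_tdig ω')
  have hsplit : ∑' i, f i = (∑ i ∈ Finset.range (k+1), f i) + ∑' i, f (i + (k+1)) :=
    ((Summable.sum_add_tsum_nat_add (k+1) hfs)).symm
  have hhead : ∑ i ∈ Finset.range (k+1), f i = f k := by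
    rw [Finset.sum_eq_single k]
    · intro i hi hik
      have hik' : i < k := by
        rcases Nat.lt_or_ge i k with h | h
        · exact h
        · exfalso; apply hik; have := Finset.mem_range.mp hi; omega
      simp only [hf, tdig, hmin i hik', sub_self]
    · intro h; exact absurd (Finset.self_mem_range_succ k) h
  have hfk : |f k| = 2/3^(k+1) := by
    have hvals : ((ω k).val : ℝ) = 0 ∧ ((ω' k).val : ℝ) = 1 ∨
        ((ω k).val : ℝ) = 1 ∧ ((ω' k).val : ℝ) = 0 := by
      have : ∀ a b : ZMod 2, a ≠ b → a.val = 0 ∧ b.val = 1 ∨ a.val = 1 ∧ b.val = 0 := by decide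
      rcases this _ _ hdiff with ⟨h1, h2⟩ | ⟨h1, h2⟩
      · left; constructor <;> simp [h1, h2]
      · right; constructor <;> simp [h1, h2]
    have h3 : (0:ℝ) < 3^(k+1) := by positivity
    rcases hvals with ⟨h1, h2⟩ | ⟨h1, h2⟩
    · simp only [hf, tdig, h1, h2]
      rw [show (2*0/3^(k+1) - 2*1/3^(k+1) : ℝ) = -(2/3^(k+1)) by ring, abs_neg,
        abs_of_pos (by positivity)]
    · simp only [hf, tdig, h1, h2]
      rw [show (2*1/3^(k+1) - 2*0/3^(k+1) : ℝ) = 2/3^(k+1) by ring,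
        abs_of_pos (by positivity)]
  have htail : |∑' i, f (i + (k+1))| ≤ (1/3)^(k+1) := by
    have hterm : ∀ i : ℕ, |f (i + (k+1))| ≤ 2/3^(i+k+2) := by
      intro i
      have h1 := tdig_nonneg ω (i + (k+1))
      have h2 := tdig_nonneg ω' (i + (k+1))
      have h3 := tdig_le ω (i + (k+1))
      have h4 := tdig_le ω' (i + (k+1))
      have he : i + (k+1) + 1 = i + k + 2 := by omega
      rw [he] at h3 h4
      rw [hf, abs_sub_le_iff]
      constructor <;> simp only [tsub_le_iff_right] <;> linarith
    have hsum2 : ∑' i : ℕ, (2:ℝ)/3^(i+k+2) = (1/3)^(k+1) := by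
      have h : (fun i : ℕ => (2:ℝ)/3^(i+k+2)) = fun i => ((2:ℝ)/3^(k+2)) * (1/3)^i := by
        funext i
        rw [show i+k+2 = (k+2) + i by omega, pow_add]
        rw [div_pow, one_pow]
        ring
      rw [h, tsum_mul_left, tsum_geometric_of_lt_one (by norm_num) (by norm_num)]
      rw [show (k:ℕ)+2 = (k+1)+1 by omega, pow_succ]
      rw [div_pow, one_pow]
      field_simp
      ring
    calc |∑' i, f (i + (k+1))| ≤ ∑' i, |f (i + (k+1))| := by
          simpa [Real.norm_eq_abs] using
            norm_tsum_le_tsum_norm (f := fun i => f (i + (k+1)))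
              (by simpa [Real.norm_eq_abs] using
                (hfs.comp_injective (add_left_injective (k+1))).abs)
      _ ≤ ∑' i : ℕ, (2:ℝ)/3^(i+k+2) := by
          apply Summable.tsum_le_tsum hterm
          · exact (hfs.comp_injective (add_left_injective (k+1))).abs
          · have : (fun i : ℕ => (2:ℝ)/3^(i+k+2)) = fun i => ((2:ℝ)/3^(k+2)) * (1/3)^i := by
              funext i
              rw [show i+k+2 = (k+2) + i by omega, pow_add, div_pow, one_pow]
              ring
            rw [this]
            exact (summable_geometric_of_lt_one (by norm_num) (by norm_num)).mul_left _
      _ = (1/3)^(k+1) := hsum2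
  rw [hsub, hsplit, hhead]
  have h1 : 2/3^(k+1) - (1/3:ℝ)^(k+1) ≤ |f k| - |∑' i, f (i + (k+1))| := by
    rw [hfk]; linarith
  have h2 : |f k| - |∑' i, f (i + (k+1))| ≤ |f k + ∑' i, f (i + (k+1))| := by
    have := abs_add_le (f k + ∑' i, f (i + (k+1))) (-(∑' i, f (i + (k+1))))
    simp only [add_neg_cancel_right, abs_neg] at this
    linarith
  have h3 : (1/3:ℝ)^(k+1) = 2/3^(k+1) - (1/3)^(k+1) := by
    rw [div_pow, one_pow]; ring
  linarith

/-! ## Mass distribution principle: lower bound for the Hausdorff measure -/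

def theta : Measure ℝ := Measure.map gmap haG

lemma theta_cantor : theta cantorSet = 1 := by
  rw [theta, Measure.map_apply gmap_measurable isClosed_cantorSet.measurableSet]
  have : gmap ⁻¹' cantorSet = univ := eq_univ_of_forall (fun ω => gmap_mem_cantor ω)
  rw [this, haG_univ]

lemma theta_small {s : Set ℝ} (hs : MeasurableSet s) {n : ℕ}
    (hd : EMetric.diam s < ENNReal.ofReal ((1/3)^n)) : theta s ≤ 2⁻¹ ^ n := by
  classical
  rw [theta, Measure.map_apply gmap_measurable hs]
  rcases Set.eq_empty_or_nonempty (gmap ⁻¹' s) with h | ⟨ω0, hω0⟩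
  · rw [h]; simp
  · have hsub : gmap ⁻¹' s ⊆ cyl n ω0 := by
      intro ω hω
      intro i hi
      by_contra hne
      have hex : ∃ j, ω j ≠ ω0 j := ⟨i, hne⟩
      set k := Nat.find hex with hk
      have hkdiff : ω k ≠ ω0 k := Nat.find_spec hex
      have hkmin : ∀ j < k, ω j = ω0 j := fun j hj =>
        not_not.mp (Nat.find_min hex hj)
      have hkle : k ≤ i := Nat.find_min' hex hne
      have hsep := gmap_sep hkdiff hkmin
      have hkn : k + 1 ≤ n := by omega
      have h1 : (1/3:ℝ)^n ≤ (1/3)^(k+1) :=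
        pow_le_pow_of_le_one (by norm_num) (by norm_num) hkn
      have hed : edist (gmap ω) (gmap ω0) ≤ EMetric.diam s :=
        EMetric.edist_le_diam_of_mem hω hω0
      rw [edist_dist, Real.dist_eq] at hed
      have : ENNReal.ofReal ((1/3:ℝ)^n) ≤ ENNReal.ofReal |gmap ω - gmap ω0| :=
        ENNReal.ofReal_le_ofReal (h1.trans hsep)
      exact absurd ((this.trans hed).trans_lt hd) (lt_irrefl _)
    calc haG (gmap ⁻¹' s) ≤ haG (cyl n ω0) := measure_mono hsub
      _ = 2⁻¹ ^ n := haG_cyl n ω0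

lemma theta_small' (s : Set ℝ) {n : ℕ}
    (hd : EMetric.diam s < ENNReal.ofReal ((1/3)^n)) : theta s ≤ 2⁻¹ ^ n := by
  have hcl : EMetric.diam (closure s) < ENNReal.ofReal ((1/3)^n) := by
    rw [EMetric.diam, Metric.ediam_closure]; exact hd
  exact (measure_mono subset_closure).trans (theta_small isClosed_closure.measurableSet hcl)

lemma half_theta_le_hausdorff : (2⁻¹ : ℝ≥0∞) • theta ≤ μH[sig] := by
  apply MeasureTheory.Measure.le_hausdorffMeasure sig _ (ENNReal.ofReal (1/3))
    (by norm_num)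
  intro s hdiam
  rcases eq_or_ne (EMetric.diam s) 0 with h0 | h0
  · have hz : theta s = 0 := by
      have hle : ∀ n : ℕ, theta s ≤ 2⁻¹ ^ n := by
        intro n
        apply theta_small' s
        rw [h0]
        positivity
      have ht : Filter.Tendsto (fun n : ℕ => (2⁻¹:ℝ≥0∞)^n) Filter.atTop (nhds 0) :=
        ENNReal.tendsto_pow_atTop_nhds_zero_of_lt_one (by norm_num)
      exact le_antisymm (ge_of_tendsto' ht hle |>.trans (le_refl 0)) (zero_le)
    simp [hz]
  · -- 0 < diam s ≤ 1/3
    have hfin : EMetric.diam s ≠ ⊤ :=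
      (hdiam.trans_lt (by norm_num : ENNReal.ofReal (1/3) < ⊤)).ne
    have htR : 0 < (EMetric.diam s).toReal := ENNReal.toReal_pos h0 hfin
    have hex : ∃ m : ℕ, ENNReal.ofReal ((1/3:ℝ)^(m+1)) ≤ EMetric.diam s := by
      obtain ⟨m, hm⟩ := exists_pow_lt_of_lt_one htR (by norm_num : (1/3:ℝ) < 1)
      refine ⟨m, ?_⟩
      have h1 : (1/3:ℝ)^(m+1) ≤ (1/3)^m :=
        pow_le_pow_of_le_one (by norm_num) (by norm_num) (by omega)
      calc ENNReal.ofReal ((1/3:ℝ)^(m+1)) ≤ ENNReal.ofReal ((EMetric.diam s).toReal) :=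
            ENNReal.ofReal_le_ofReal (by linarith)
        _ = EMetric.diam s := ENNReal.ofReal_toReal hfin
    set n := Nat.find hex with hn
    have hP : ENNReal.ofReal ((1/3:ℝ)^(n+1)) ≤ EMetric.diam s := Nat.find_spec hex
    have hlt : EMetric.diam s < ENNReal.ofReal ((1/3:ℝ)^n) := by
      by_cases hz : n = 0
      · rw [hz, pow_zero]
        calc EMetric.diam s ≤ ENNReal.ofReal (1/3) := hdiam
          _ < ENNReal.ofReal 1 :=
              (ENNReal.ofReal_lt_ofReal_iff_of_nonneg (by norm_num)).mpr (by norm_num)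
      · have hmin := Nat.find_min hex (show n - 1 < n by omega)
        have he : n - 1 + 1 = n := by omega
        rw [he] at hmin
        exact lt_of_not_ge hmin
    have hts : theta s ≤ 2⁻¹ ^ n := theta_small' s hlt
    have hkey : (2⁻¹:ℝ≥0∞) ^ (n+1) ≤ EMetric.diam s ^ sig := by
      rw [← enn_third_rpow (n+1)]
      exact ENNReal.rpow_le_rpow hP sig_nonneg
    calc ((2⁻¹ : ℝ≥0∞) • theta) s = 2⁻¹ * theta s := rfl
      _ ≤ 2⁻¹ * 2⁻¹ ^ n := by exact mul_le_mul_right hts _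
      _ = 2⁻¹ ^ (n+1) := by rw [pow_succ]; ring
      _ ≤ EMetric.diam s ^ sig := hkey

lemma Hcantor_pos : (2⁻¹ : ℝ≥0∞) ≤ μH[sig] cantorSet := by
  have h := half_theta_le_hausdorff cantorSet
  calc (2⁻¹ : ℝ≥0∞) = ((2⁻¹ : ℝ≥0∞) • theta) cantorSet := by
        simp [theta_cantor]
    _ ≤ μH[sig] cantorSet := h

/-! ## Transfer to the Cantor set in `[-π, π]` -/

def Tmap (x : ℝ) : ℝ := 2 * π * x - π
def Tinv (y : ℝ) : ℝ := (y + π) / (2 * π)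

lemma Tmap_lipschitz : LipschitzWith (Real.toNNReal (2*π)) Tmap := by
  apply LipschitzWith.of_dist_le_mul
  intro x y
  rw [Real.dist_eq, Real.dist_eq, Real.coe_toNNReal _ (by positivity)]
  have : Tmap x - Tmap y = (2*π) * (x - y) := by unfold Tmap; ring
  rw [this, abs_mul, abs_of_pos (by positivity)]

lemma Tinv_lipschitz : LipschitzWith (Real.toNNReal (2*π)⁻¹) Tinv := by
  apply LipschitzWith.of_dist_le_mul
  intro x y
  rw [Real.dist_eq, Real.dist_eq, Real.coe_toNNReal _ (by positivity)]
  have h1 : Tinv x - Tinv y = (2*π)⁻¹ * (x - y) := by unfold Tinv; field_simp; ring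
  have h2 : |(2*π)⁻¹ * (x-y)| = (2*π)⁻¹ * |x-y| := by
    rw [abs_mul, abs_of_pos (by positivity)]
  rw [h1, h2]

lemma Tinv_Tmap (x : ℝ) : Tinv (Tmap x) = x := by
  unfold Tinv Tmap; field_simp; ring

lemma Tmap_Tinv (x : ℝ) : Tmap (Tinv x) = x := by
  unfold Tinv Tmap; field_simp; ring

lemma cantorPi_eq : cantorPi = Tmap '' cantorSet := rfl

lemma coe_toNNReal_rpow (r : ℝ) (hr : 0 < r) :
    ((Real.toNNReal r : ℝ≥0∞)) ^ sig = ENNReal.ofReal (r ^ sig) := by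
  rw [← ENNReal.ofReal_rpow_of_pos hr]
  rfl

lemma HcantorPi_le : μH[sig] cantorPi ≤ ENNReal.ofReal ((2*π)^sig) := by
  rw [cantorPi_eq]
  calc μH[sig] (Tmap '' cantorSet)
      ≤ (Real.toNNReal (2*π) : ℝ≥0∞) ^ sig * μH[sig] cantorSet :=
        Tmap_lipschitz.hausdorffMeasure_image_le sig_nonneg cantorSet
    _ ≤ (Real.toNNReal (2*π) : ℝ≥0∞) ^ sig * 1 := mul_le_mul_right Hcantor_le_one _
    _ = ENNReal.ofReal ((2*π)^sig) := by rw [mul_one, coe_toNNReal_rpow _ (by positivity)]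

lemma HcantorPi_lt_top : μH[sig] cantorPi < ⊤ :=
  HcantorPi_le.trans_lt ENNReal.ofReal_lt_top

lemma cantorSet_eq_Tinv : cantorSet = Tinv '' cantorPi := by
  rw [cantorPi_eq, Set.image_image]
  simp only [Tinv_Tmap, Set.image_id']

lemma HcantorPi_pos : 0 < μH[sig] cantorPi := by
  rw [pos_iff_ne_zero]
  intro h0
  have h1 : μH[sig] cantorSet ≤ (Real.toNNReal (2*π)⁻¹ : ℝ≥0∞) ^ sig * μH[sig] cantorPi := by
    rw [cantorSet_eq_Tinv]
    exact Tinv_lipschitz.hausdorffMeasure_image_le sig_nonneg cantorPi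
  rw [h0, mul_zero] at h1
  have h2 := Hcantor_pos
  have : (2⁻¹ : ℝ≥0∞) = 0 := le_antisymm (h2.trans h1) (zero_le)
  norm_num at this

lemma preimage_Tmap_eq (A : Set ℝ) : Tmap ⁻¹' A = Tinv '' A := by
  ext y
  constructor
  · intro hy; exact ⟨Tmap y, hy, Tinv_Tmap y⟩
  · rintro ⟨a, ha, rfl⟩; simpa [Set.mem_preimage, Tmap_Tinv] using ha

lemma regPi {A : Set ℝ} {n : ℕ}
    (hA : EMetric.diam A ≤ ENNReal.ofReal (2*π*(1/3)^(n+1))) :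
    μH[sig] (cantorPi ∩ A) ≤ ENNReal.ofReal ((2*π)^sig) * 2⁻¹ ^ n := by
  have hsub : cantorPi ∩ A ⊆ Tmap '' (cantorSet ∩ Tmap ⁻¹' A) := by
    rintro x ⟨⟨y, hy, rfl⟩, hxA⟩
    exact ⟨y, ⟨hy, hxA⟩, rfl⟩
  have hdiam : EMetric.diam (Tmap ⁻¹' A) < ENNReal.ofReal ((1/3)^n) := by
    rw [preimage_Tmap_eq]
    have h1 := Tinv_lipschitz.ediam_image_le A
    have h2 : (Real.toNNReal (2*π)⁻¹ : ℝ≥0∞) * EMetric.diam A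
        ≤ ENNReal.ofReal ((2*π)⁻¹) * ENNReal.ofReal (2*π*(1/3)^(n+1)) := by
      exact mul_le_mul' (by rfl) hA
    have h3 : ENNReal.ofReal ((2*π)⁻¹) * ENNReal.ofReal (2*π*(1/3)^(n+1))
        = ENNReal.ofReal ((1/3)^(n+1)) := by
      rw [← ENNReal.ofReal_mul (by positivity)]
      congr 1
      field_simp
    have h4 : ENNReal.ofReal ((1/3:ℝ)^(n+1)) < ENNReal.ofReal ((1/3)^n) := by
      rw [ENNReal.ofReal_lt_ofReal_iff (by positivity)]
      exact pow_lt_pow_right_of_lt_one₀ (by norm_num) (by norm_num) (by omega)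
    calc EMetric.diam (Tinv '' A) ≤ _ := h1
      _ ≤ _ := h2
      _ = _ := h3
      _ < _ := h4
  calc μH[sig] (cantorPi ∩ A) ≤ μH[sig] (Tmap '' (cantorSet ∩ Tmap ⁻¹' A)) :=
        measure_mono hsub
    _ ≤ (Real.toNNReal (2*π) : ℝ≥0∞) ^ sig * μH[sig] (cantorSet ∩ Tmap ⁻¹' A) :=
        Tmap_lipschitz.hausdorffMeasure_image_le sig_nonneg _
    _ ≤ (Real.toNNReal (2*π) : ℝ≥0∞) ^ sig * 2⁻¹ ^ n := mul_le_mul_right (Hsmall hdiam) _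
    _ = ENNReal.ofReal ((2*π)^sig) * 2⁻¹ ^ n := by rw [coe_toNNReal_rpow _ (by positivity)]

def CB2 : ℝ≥0∞ := 2 * ENNReal.ofReal ((2*π)^sig)

lemma CB2_ne_top : CB2 ≠ ⊤ := by
  unfold CB2
  exact (ENNReal.mul_lt_top (by norm_num) ENNReal.ofReal_lt_top).ne

lemma ballPi (x : ℝ) (n : ℕ) :
    μH[sig] (cantorPi ∩ Metric.closedBall x (π*(1/3)^n)) ≤ CB2 * 2⁻¹ ^ n := by
  cases n with
  | zero =>
    calc μH[sig] (cantorPi ∩ _) ≤ μH[sig] cantorPi := measure_mono inter_subset_left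
      _ ≤ ENNReal.ofReal ((2*π)^sig) := HcantorPi_le
      _ ≤ CB2 * 2⁻¹ ^ 0 := by
          rw [pow_zero, mul_one]
          unfold CB2
          exact le_mul_of_one_le_left' (by norm_num)
  | succ k =>
    have hdiam : EMetric.diam (Metric.closedBall x (π*(1/3)^(k+1)))
        ≤ ENNReal.ofReal (2*π*(1/3)^(k+1)) := by
      rw [Real.closedBall_eq_Icc, EMetric.diam, Real.ediam_Icc]
      apply ENNReal.ofReal_le_ofReal
      ring_nf
      exact le_refl _
    calc μH[sig] (cantorPi ∩ _) ≤ ENNReal.ofReal ((2*π)^sig) * 2⁻¹ ^ k := regPi hdiam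
      _ = CB2 * 2⁻¹ ^ (k+1) := by
          rw [CB2, pow_succ, show (2:ℝ≥0∞) * ENNReal.ofReal ((2*π)^sig) * (2⁻¹^k * 2⁻¹)
            = (2 * 2⁻¹) * (ENNReal.ofReal ((2*π)^sig) * 2⁻¹^k) by ring,
            ENNReal.mul_inv_cancel (by norm_num) (by norm_num), one_mul]
  
lemma cantorPi_subset : cantorPi ⊆ Icc (-π) π := by
  rintro x ⟨y, hy, rfl⟩
  have h := cantorSet_subset_unitInterval hy
  have hπ := Real.pi_pos
  constructor <;> simp only <;> nlinarith [h.1, h.2]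

lemma isCompact_cantorPi : IsCompact cantorPi :=
  isCompact_cantorSet.image (by fun_prop)

lemma measurableSet_cantorPi : MeasurableSet cantorPi :=
  isCompact_cantorPi.isClosed.measurableSet

/-! ## Lebesgue measure of the Cantor set is zero -/

lemma volume_preCantor (n : ℕ) :
    (volume : Measure ℝ) (preCantorSet n) ≤ (ENNReal.ofReal (2/3)) ^ n := by
  induction n with
  | zero => simp [preCantorSet_zero, Real.volume_Icc]
  | succ n ih =>
    have hlip : ∀ c : ℝ, LipschitzWith (Real.toNNReal (1/3)) (fun x : ℝ => (c + x)/3) := by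
      intro c
      apply LipschitzWith.of_dist_le_mul
      intro x y
      rw [Real.dist_eq, Real.dist_eq, Real.coe_toNNReal _ (by positivity)]
      have : (c+x)/3 - (c+y)/3 = (x - y)/3 := by ring
      rw [this, abs_div, abs_of_pos (by norm_num : (0:ℝ) < 3)]
      ring_nf
      exact le_refl _
    have him : ∀ c : ℝ, ∀ S : Set ℝ, volume ((fun x : ℝ => (c + x)/3) '' S)
        ≤ ENNReal.ofReal (1/3) * volume S := by
      intro c S
      calc volume ((fun x : ℝ => (c + x)/3) '' S)
          = μH[(1:ℝ)] ((fun x : ℝ => (c + x)/3) '' S) := by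
            rw [MeasureTheory.hausdorffMeasure_real]
        _ ≤ (Real.toNNReal (1/3) : ℝ≥0∞) ^ (1:ℝ) * μH[(1:ℝ)] S :=
            (hlip c).hausdorffMeasure_image_le zero_le_one S
        _ = ENNReal.ofReal (1/3) * volume S := by
            rw [ENNReal.rpow_one, MeasureTheory.hausdorffMeasure_real]
            rfl
    rw [preCantorSet_succ]
    have hf0 : (· / 3) '' preCantorSet n = (fun x : ℝ => ((0:ℝ) + x)/3) '' preCantorSet n := by
      apply Set.image_congr
      intro a _
      simp
    have hf1 : (fun x : ℝ => (2 + x)/3) '' preCantorSet n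
        = (fun x : ℝ => ((2:ℝ) + x)/3) '' preCantorSet n := rfl
    calc volume ((· / 3) '' preCantorSet n ∪ (fun x : ℝ => (2 + x)/3) '' preCantorSet n)
        ≤ volume ((· / 3) '' preCantorSet n) + volume ((fun x : ℝ => (2 + x)/3) '' preCantorSet n) :=
          measure_union_le _ _
      _ ≤ ENNReal.ofReal (1/3) * volume (preCantorSet n)
          + ENNReal.ofReal (1/3) * volume (preCantorSet n) := by
          apply add_le_add
          · rw [hf0]; exact him 0 _
          · rw [hf1]; exact him 2 _
      _ = (2 * ENNReal.ofReal (1/3)) * volume (preCantorSet n) := by ring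
      _ ≤ (2 * ENNReal.ofReal (1/3)) * ENNReal.ofReal (2/3) ^ n := mul_le_mul_right ih _
      _ = ENNReal.ofReal (2/3) ^ (n+1) := by
          rw [show (2:ℝ≥0∞) = ENNReal.ofReal 2 by simp, ← ENNReal.ofReal_mul (by norm_num),
            pow_succ]
          rw [show (2:ℝ)*(1/3) = 2/3 by norm_num]
          ring

lemma volume_cantorSet : (volume : Measure ℝ) cantorSet = 0 := by
  have hle : ∀ n : ℕ, (volume : Measure ℝ) cantorSet ≤ ENNReal.ofReal (2/3) ^ n :=
    fun n => (measure_mono (Set.iInter_subset _ n)).trans (volume_preCantor n)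
  have ht : Filter.Tendsto (fun n : ℕ => (ENNReal.ofReal (2/3:ℝ))^n) Filter.atTop (nhds 0) :=
    ENNReal.tendsto_pow_atTop_nhds_zero_of_lt_one
      (by rw [show (1:ℝ≥0∞) = ENNReal.ofReal 1 by simp]
          exact (ENNReal.ofReal_lt_ofReal_iff (by norm_num)).mpr (by norm_num))
  exact le_antisymm (ge_of_tendsto' ht hle) (zero_le)

lemma volume_cantorPi : (volume : Measure ℝ) cantorPi = 0 := by
  rw [cantorPi_eq]
  have h : volume (Tmap '' cantorSet) ≤ (Real.toNNReal (2*π) : ℝ≥0∞) ^ (1:ℝ) * volume cantorSet := by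
    calc volume (Tmap '' cantorSet) = μH[(1:ℝ)] (Tmap '' cantorSet) := by
          rw [MeasureTheory.hausdorffMeasure_real]
      _ ≤ (Real.toNNReal (2*π) : ℝ≥0∞) ^ (1:ℝ) * μH[(1:ℝ)] cantorSet :=
          Tmap_lipschitz.hausdorffMeasure_image_le zero_le_one cantorSet
      _ = (Real.toNNReal (2*π) : ℝ≥0∞) ^ (1:ℝ) * volume cantorSet := by
          rw [MeasureTheory.hausdorffMeasure_real]
  rw [volume_cantorSet, mul_zero] at h
  exact le_antisymm h (zero_le)

/-! ## Circle-side lemmas -/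

lemma two_pi_pos : (0:ℝ) < 2*π := by positivity

lemma reprIco_coe (b : ℝ) : reprIco (toS1 b) = toIcoMod two_pi_pos (-π) b := rfl

lemma reprIco_mem (z : S1) : reprIco z ∈ Ico (-π) π := by
  unfold reprIco
  have h := (AddCircle.equivIco (2*π) (-π) z).2
  exact ⟨h.1, by have := h.2; linarith⟩

lemma abs_reprIco_le (z : S1) : |reprIco z| ≤ π := by
  have h := reprIco_mem z
  rw [abs_le]
  exact ⟨h.1, h.2.le⟩

lemma coe_reprIco (z : S1) : toS1 (reprIco z) = z := by
  conv_rhs => rw [← (AddCircle.equivIco (2*π) (-π)).symm_apply_apply z]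
  rfl

lemma toS1_zero : toS1 0 = 0 := rfl

lemma reprIco_zero : reprIco (0:S1) = 0 := by
  rw [show (0:S1) = toS1 0 from rfl, reprIco_coe]
  refine (toIcoMod_eq_self two_pi_pos).mpr ⟨by linarith [Real.pi_pos], by linarith [Real.pi_pos]⟩

lemma reprIco_eq_zero_iff {z : S1} : reprIco z = 0 ↔ z = 0 :=
  ⟨fun h => by rw [← coe_reprIco z, h, toS1_zero], fun h => by rw [h, reprIco_zero]⟩

lemma measurable_reprIco : Measurable reprIco :=
  measurable_subtype_coe.comp (AddCircle.measurableEquivIco (2*π) (-π)).measurable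

lemma measurable_toS1 : Measurable toS1 := AddCircle.measurable_mk'

lemma continuous_toS1 : Continuous toS1 := AddCircle.continuous_mk' (2*π)

lemma measurable_Wker : Measurable Wker := by
  unfold Wker
  apply Measurable.ite
  · have h : {z : S1 | z = 0} = {(0:S1)} := rfl
    rw [h]
    exact isClosed_singleton.measurableSet
  · exact measurable_const
  · exact ENNReal.measurable_ofReal.comp
      ((Real.measurable_log.comp
        ((Real.continuous_sin.measurable.comp (measurable_reprIco.div_const 2)).abs)).const_mul _)

lemma sub_toS1 (x0 : S1) (b : ℝ) : x0 - toS1 b = toS1 (reprIco x0 - b) := by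
  conv_lhs => rw [← coe_reprIco x0]
  exact (QuotientAddGroup.mk_sub _ (reprIco x0) b).symm

/-! ## The normalized restricted measure -/

def rhoR : Measure ℝ := (μH[sig] cantorPi)⁻¹ • (μH[sig]).restrict cantorPi

def muS : Measure S1 := rhoR.map toS1

lemma rhoR_apply (A : Set ℝ) :
    rhoR A = (μH[sig] cantorPi)⁻¹ * μH[sig] (A ∩ cantorPi) := by
  rw [rhoR, Measure.smul_apply, smul_eq_mul, Measure.restrict_apply' measurableSet_cantorPi]

lemma rhoR_univ : rhoR univ = 1 := by
  rw [rhoR_apply, univ_inter]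
  exact ENNReal.inv_mul_cancel HcantorPi_pos.ne' HcantorPi_lt_top.ne

lemma rhoR_countable_null {S : Set ℝ} (hS : S.Countable) : rhoR S = 0 := by
  haveI : MeasureTheory.NullSingletonClass (μH[sig] : Measure ℝ) :=
    MeasureTheory.Measure.noAtoms_hausdorff ℝ sig_pos
  have h1 : μH[sig] (S ∩ cantorPi) = 0 :=
    measure_mono_null inter_subset_left (Set.Countable.measure_zero hS _)
  rw [rhoR_apply, h1, mul_zero]

lemma muS_prob : IsProbabilityMeasure muS :=
  ⟨by rw [muS, Measure.map_apply measurable_toS1 MeasurableSet.univ, preimage_univ, rhoR_univ]⟩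

/-! ## Energy estimates -/

lemma Wker_le_of_ne {z : S1} (hz : z ≠ 0) :
    Wker z ≤ ENNReal.ofReal ((1/π) * (Real.log π - Real.log |reprIco z|)) := by
  unfold Wker
  rw [if_neg hz]
  apply ENNReal.ofReal_le_ofReal
  set t := reprIco z with ht
  have htne : t ≠ 0 := fun h => hz (reprIco_eq_zero_iff.mp h)
  have htabs : 0 < |t| := abs_pos.mpr htne
  have htle : |t| ≤ π := abs_reprIco_le z
  have hπ := Real.pi_pos
  have hsin : |t|/π ≤ |Real.sin (t/2)| := by
    have h2 : |t/2| ≤ π/2 := by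
      rw [abs_div, abs_of_pos (by norm_num : (0:ℝ) < 2)]
      linarith
    have h3 := Real.mul_abs_le_abs_sin h2
    have h4 : 2/π * |t/2| = |t|/π := by
      rw [abs_div, abs_of_pos (by norm_num : (0:ℝ) < 2)]
      field_simp
    linarith [h4 ▸ h3]
  have hlog : Real.log (|t|/π) ≤ Real.log |Real.sin (t/2)| :=
    Real.log_le_log (by positivity) hsin
  rw [Real.log_div htabs.ne' hπ.ne'] at hlog
  have h5 : -(Real.log |Real.sin (t/2)|) ≤ Real.log π - Real.log |t| := by linarith
  have h6 : (0:ℝ) ≤ 1/π := by positivity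
  calc -(1/π) * Real.log |Real.sin (t/2)| = (1/π) * (-(Real.log |Real.sin (t/2)|)) := by ring
    _ ≤ (1/π) * (Real.log π - Real.log |t|) := by
        exact mul_le_mul_of_nonneg_left h5 h6

lemma mem_ball_of_D_le {x0 : S1} {b r : ℝ} (hb : b ∈ Icc (-π) π) (hr : r ≤ π)
    (hD : |reprIco (x0 - toS1 b)| ≤ r) :
    b ∈ Metric.closedBall (reprIco x0 - 2*π) r ∪ Metric.closedBall (reprIco x0) r
      ∪ Metric.closedBall (reprIco x0 + 2*π) r := by
  have hπ := Real.pi_pos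
  set a := reprIco x0 with ha
  have ham := reprIco_mem x0
  rw [← ha] at ham
  have hz : x0 - toS1 b = toS1 (a - b) := sub_toS1 x0 b
  rw [hz, reprIco_coe] at hD
  set k := toIcoDiv two_pi_pos (-π) (a - b) with hk
  have htm : toIcoMod two_pi_pos (-π) (a-b) = (a-b) - k • (2*π) := rfl
  rw [htm, zsmul_eq_mul] at hD
  have habk : |b - (a - k*(2*π))| ≤ r := by
    rw [show b - (a - k*(2*π)) = -((a-b) - k*(2*π)) by ring, abs_neg]
    exact hD
  have hab : |a - b| ≤ 2*π := by
    rw [abs_le]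
    constructor
    · linarith [ham.1, hb.2]
    · linarith [ham.2.le, hb.1]
  have hk3 : |(k:ℝ)| * (2*π) ≤ 3*π := by
    have h1 : |(k:ℝ)*(2*π)| ≤ |a-b| + |(a-b) - (k:ℝ)*(2*π)| := by
      have := abs_sub (a-b) ((a-b) - (k:ℝ)*(2*π))
      calc |(k:ℝ)*(2*π)| = |(a-b) - ((a-b) - (k:ℝ)*(2*π))| := by ring_nf
        _ ≤ |a-b| + |(a-b) - (k:ℝ)*(2*π)| := abs_sub _ _
    rw [abs_mul, abs_of_pos two_pi_pos] at h1
    linarith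
  have hkint : k = -1 ∨ k = 0 ∨ k = 1 := by
    have h2 : |(k:ℝ)| ≤ 3/2 := by nlinarith
    have h3 : |k| ≤ 1 := by
      by_contra h4
      push_neg at h4
      have h5 : (2:ℝ) ≤ |(k:ℝ)| := by
        rw [← Int.cast_abs]
        exact_mod_cast h4
      linarith
    rw [abs_le] at h3
    omega
  rcases hkint with h | h | h
  · right
    rw [Metric.mem_closedBall, Real.dist_eq]
    have : a + 2*π = a - (k:ℤ)*(2*π) := by rw [h]; push_cast; ring
    rw [this]
    exact habk
  · left; right
    rw [Metric.mem_closedBall, Real.dist_eq]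
    have : a = a - (k:ℤ)*(2*π) := by rw [h]; push_cast; ring
    rw [this]
    exact habk
  · left; left
    rw [Metric.mem_closedBall, Real.dist_eq]
    have : a - 2*π = a - (k:ℤ)*(2*π) := by rw [h]; push_cast; ring
    rw [this]
    exact habk

def Econst : ℝ≥0∞ := (μH[sig] cantorPi)⁻¹ * (3 * CB2)

lemma rhoR_D_le (x0 : S1) (n : ℕ) :
    rhoR {b : ℝ | |reprIco (x0 - toS1 b)| ≤ π * (1/3)^n} ≤ Econst * 2⁻¹ ^ n := by
  set r := π * (1/3)^n with hr
  have hπ := Real.pi_pos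
  have hrπ : r ≤ π := by
    rw [hr]
    nlinarith [pow_le_one₀ (by norm_num : (0:ℝ) ≤ 1/3) (by norm_num : (1/3:ℝ) ≤ 1) (n := n)]
  rw [rhoR_apply, Econst]
  rw [mul_assoc]
  apply mul_le_mul_right
  have hsub : {b : ℝ | |reprIco (x0 - toS1 b)| ≤ r} ∩ cantorPi ⊆
      (Metric.closedBall (reprIco x0 - 2*π) r ∪ Metric.closedBall (reprIco x0) r
        ∪ Metric.closedBall (reprIco x0 + 2*π) r) ∩ cantorPi := by
    rintro b ⟨hDb, hbC⟩
    exact ⟨mem_ball_of_D_le (cantorPi_subset hbC) hrπ hDb, hbC⟩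
  calc μH[sig] ({b : ℝ | |reprIco (x0 - toS1 b)| ≤ r} ∩ cantorPi)
      ≤ μH[sig] ((Metric.closedBall (reprIco x0 - 2*π) r ∪ Metric.closedBall (reprIco x0) r
          ∪ Metric.closedBall (reprIco x0 + 2*π) r) ∩ cantorPi) := measure_mono hsub
    _ ≤ μH[sig] (Metric.closedBall (reprIco x0 - 2*π) r ∩ cantorPi)
        + μH[sig] (Metric.closedBall (reprIco x0) r ∩ cantorPi)
        + μH[sig] (Metric.closedBall (reprIco x0 + 2*π) r ∩ cantorPi) := by
        rw [union_inter_distrib_right, union_inter_distrib_right]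
        exact (measure_union_le _ _).trans (add_le_add_left (measure_union_le _ _) _)
    _ ≤ CB2 * 2⁻¹ ^ n + CB2 * 2⁻¹ ^ n + CB2 * 2⁻¹ ^ n := by
        have h1 := ballPi (reprIco x0 - 2*π) n
        have h2 := ballPi (reprIco x0) n
        have h3 := ballPi (reprIco x0 + 2*π) n
        rw [inter_comm] at h1 h2 h3
        exact add_le_add (add_le_add h1 h2) h3
    _ = 3 * (CB2 * 2⁻¹ ^ n) := by ring
    _ ≤ 3 * CB2 * 2⁻¹ ^ n := by rw [mul_assoc]

lemma Econst_ne_top : Econst ≠ ⊤ := by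
  unfold Econst
  apply (ENNReal.mul_lt_top ?_ ?_).ne
  · exact (ENNReal.inv_lt_top.mpr HcantorPi_pos)
  · exact ENNReal.mul_lt_top (by norm_num) (lt_of_le_of_ne le_top CB2_ne_top)

lemma inner_bound (x0 : S1) :
    ∫⁻ b, Wker (x0 - toS1 b) ∂rhoR
      ≤ ∑' n : ℕ, ENNReal.ofReal (((n:ℝ)+1) * Real.log 3 / π) * (Econst * 2⁻¹ ^ n) := by
  classical
  have hπ := Real.pi_pos
  set D : ℝ → ℝ := fun b => |reprIco (x0 - toS1 b)| with hDdef
  have hDeq : ∀ b, D b = |reprIco (toS1 (reprIco x0 - b))| := by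
    intro b
    rw [hDdef]
    simp only
    rw [sub_toS1]
  have hDmeas : Measurable D := by
    have h : D = fun b => |reprIco (toS1 (reprIco x0 - b))| := funext hDeq
    rw [h]
    exact ((measurable_reprIco.comp (measurable_toS1.comp
      (measurable_const.sub measurable_id)))).abs
  set S0 : Set ℝ := {b | D b = 0} with hS0
  set Ann : ℕ → Set ℝ := fun n => {b | π * (1/3)^(n+1) < D b ∧ D b ≤ π * (1/3)^n} with hAnn
  have hAnnMeas : ∀ n, MeasurableSet (Ann n) := fun n =>
    (measurableSet_lt measurable_const hDmeas).inter (measurableSet_le hDmeas measurable_const)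
  have hcover : (univ : Set ℝ) ⊆ S0 ∪ ⋃ n, Ann n := by
    intro b _
    by_cases hb0 : D b = 0
    · exact Or.inl hb0
    · right
      have hDpos : 0 < D b := lt_of_le_of_ne (abs_nonneg _) (Ne.symm hb0)
      have hDle : D b ≤ π := abs_reprIco_le _
      have hex : ∃ m : ℕ, π * (1/3)^(m+1) < D b := by
        obtain ⟨m, hm⟩ := exists_pow_lt_of_lt_one (div_pos hDpos hπ) (by norm_num : (1/3:ℝ) < 1)
        refine ⟨m, ?_⟩
        have h1 : (1/3:ℝ)^(m+1) ≤ (1/3)^m :=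
          pow_le_pow_of_le_one (by norm_num) (by norm_num) (by omega)
        have h2 : (1/3:ℝ)^(m+1) < D b / π := lt_of_le_of_lt h1 hm
        calc π * (1/3)^(m+1) < π * (D b / π) := by
              exact mul_lt_mul_of_pos_left h2 hπ
          _ = D b := by field_simp
      set n := Nat.find hex with hn
      refine mem_iUnion.mpr ⟨n, Nat.find_spec hex, ?_⟩
      by_cases hz : n = 0
      · rw [hz, pow_zero, mul_one]; exact hDle
      · have hmin := Nat.find_min hex (show n - 1 < n by omega)
        have he : n - 1 + 1 = n := by omega
        rw [he] at hmin
        linarith [not_lt.mp hmin]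
  have hWann : ∀ n : ℕ, ∀ b ∈ Ann n,
      Wker (x0 - toS1 b) ≤ ENNReal.ofReal (((n:ℝ)+1) * Real.log 3 / π) := by
    intro n b hb
    obtain ⟨hb1, hb2⟩ := hb
    have hDpos : 0 < D b := lt_trans (by positivity) hb1
    have hzne : x0 - toS1 b ≠ 0 := by
      intro h
      rw [hDdef] at hDpos
      simp only [h, reprIco_zero, abs_zero] at hDpos
      exact lt_irrefl _ hDpos
    refine (Wker_le_of_ne hzne).trans (ENNReal.ofReal_le_ofReal ?_)
    have hlog1 : Real.log (π * (1/3)^(n+1)) ≤ Real.log (D b) :=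
      Real.log_le_log (by positivity) hb1.le
    have hlog2 : Real.log (π * (1/3)^(n+1)) = Real.log π - ((n:ℝ)+1) * Real.log 3 := by
      rw [Real.log_mul hπ.ne' (by positivity), Real.log_pow, one_div, Real.log_inv]
      push_cast
      ring
    have h3 : Real.log π - Real.log (D b) ≤ ((n:ℝ)+1) * Real.log 3 := by
      rw [hlog2] at hlog1; linarith
    calc (1/π) * (Real.log π - Real.log (D b)) ≤ (1/π) * (((n:ℝ)+1) * Real.log 3) :=
          mul_le_mul_of_nonneg_left h3 (by positivity)
      _ = ((n:ℝ)+1) * Real.log 3 / π := by ring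
  have hS0null : rhoR S0 = 0 := by
    apply rhoR_countable_null
    have hsub : S0 ⊆ Set.range (fun k : ℤ => reprIco x0 + k * (2*π)) := by
      intro b hb
      have h1 : reprIco (x0 - toS1 b) = 0 := abs_eq_zero.mp hb
      have h2 : x0 - toS1 b = 0 := reprIco_eq_zero_iff.mp h1
      have h3 : toS1 (reprIco x0 - b) = 0 := by rw [← sub_toS1]; exact h2
      obtain ⟨k, hk⟩ := (AddCircle.coe_eq_zero_iff (2*π)).mp h3
      refine ⟨-k, ?_⟩
      simp only
      rw [zsmul_eq_mul] at hk
      push_cast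
      linarith [hk]
    exact Set.Countable.mono hsub (Set.countable_range _)
  calc ∫⁻ b, Wker (x0 - toS1 b) ∂rhoR
      = ∫⁻ b in univ, Wker (x0 - toS1 b) ∂rhoR := (setLIntegral_univ _).symm
    _ ≤ ∫⁻ b in S0 ∪ ⋃ n, Ann n, Wker (x0 - toS1 b) ∂rhoR := lintegral_mono_set hcover
    _ ≤ (∫⁻ b in S0, Wker (x0 - toS1 b) ∂rhoR)
        + ∫⁻ b in ⋃ n, Ann n, Wker (x0 - toS1 b) ∂rhoR := lintegral_union_le _ _ _
    _ ≤ 0 + ∑' n, ∫⁻ b in Ann n, Wker (x0 - toS1 b) ∂rhoR := by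
        apply add_le_add
        · rw [setLIntegral_measure_zero _ _ hS0null]
        · exact lintegral_iUnion_le _ _
    _ ≤ ∑' n : ℕ, ENNReal.ofReal (((n:ℝ)+1) * Real.log 3 / π) * (Econst * 2⁻¹ ^ n) := by
        rw [zero_add]
        apply ENNReal.tsum_le_tsum
        intro n
        calc ∫⁻ b in Ann n, Wker (x0 - toS1 b) ∂rhoR
            ≤ ∫⁻ _ in Ann n, ENNReal.ofReal (((n:ℝ)+1) * Real.log 3 / π) ∂rhoR :=
              setLIntegral_mono' (hAnnMeas n) (hWann n)
          _ = ENNReal.ofReal (((n:ℝ)+1) * Real.log 3 / π) * rhoR (Ann n) :=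
              setLIntegral_const _ _
          _ ≤ ENNReal.ofReal (((n:ℝ)+1) * Real.log 3 / π) * (Econst * 2⁻¹ ^ n) := by
              apply mul_le_mul_right
              refine le_trans (measure_mono ?_) (rhoR_D_le x0 n)
              intro b hb
              exact hb.2

lemma esum_lt_top :
    (∑' n : ℕ, ENNReal.ofReal (((n:ℝ)+1) * Real.log 3 / π) * (Econst * 2⁻¹ ^ n)) < ⊤ := by
  have hπ := Real.pi_pos
  have hL : (0:ℝ) ≤ Real.log 3 / π := div_nonneg (Real.log_nonneg (by norm_num)) hπ.le
  have hterm : ∀ n : ℕ, ENNReal.ofReal (((n:ℝ)+1) * Real.log 3 / π) * (Econst * 2⁻¹ ^ n)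
      = Econst * ENNReal.ofReal ((((n:ℝ)+1) * (Real.log 3 / π)) * (1/2)^n) := by
    intro n
    rw [show ((n:ℝ)+1) * Real.log 3 / π = ((n:ℝ)+1) * (Real.log 3 / π) by ring]
    rw [ENNReal.ofReal_mul (mul_nonneg (by positivity) hL),
      ENNReal.ofReal_pow (by norm_num : (0:ℝ) ≤ 1/2), ofReal_half]
    ring
  rw [tsum_congr hterm, ENNReal.tsum_mul_left]
  apply ENNReal.mul_lt_top (lt_of_le_of_ne le_top Econst_ne_top)
  have hsumm : Summable (fun n : ℕ => (((n:ℝ)+1) * (Real.log 3/π)) * (1/2)^n) := by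
    have h1 : Summable (fun n : ℕ => ((n:ℝ)) * (1/2)^n) := by
      have h := summable_pow_mul_geometric_of_norm_lt_one 1
        (show ‖(1/2:ℝ)‖ < 1 by
          rw [Real.norm_eq_abs, abs_of_pos (by norm_num : (0:ℝ) < 1/2)]; norm_num)
      simpa using h
    have h2 : Summable (fun n : ℕ => ((1:ℝ)/2)^n) :=
      summable_geometric_of_lt_one (by norm_num) (by norm_num)
    apply Summable.congr ((h1.add h2).mul_left (Real.log 3/π))
    intro n
    ring
  rw [← ENNReal.ofReal_tsum_of_nonneg
    (fun n => mul_nonneg (mul_nonneg (by positivity) hL) (by positivity)) hsumm]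
  exact ENNReal.ofReal_lt_top

lemma interaction_lt_top : interactionF muS < ⊤ := by
  set Esum := ∑' n : ℕ, ENNReal.ofReal (((n:ℝ)+1) * Real.log 3 / π) * (Econst * 2⁻¹ ^ n)
    with hE
  have hinner : ∀ x : S1, ∫⁻ y, Wker (x - y) ∂muS ≤ Esum := by
    intro x
    have hfm : Measurable fun y : S1 => Wker (x - y) :=
      measurable_Wker.comp ((continuous_const.sub continuous_id).measurable)
    rw [muS, lintegral_map hfm measurable_toS1]
    exact inner_bound x
  haveI := muS_prob
  calc interactionF muS ≤ ∫⁻ _, Esum ∂muS := lintegral_mono hinner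
    _ = Esum * muS univ := lintegral_const _
    _ = Esum := by rw [measure_univ, mul_one]
    _ < ⊤ := esum_lt_top

lemma muS_sing : muS ⟂ₘ (volume : Measure S1) := by
  have hEcl : IsClosed (toS1 '' cantorPi) := (isCompact_cantorPi.image continuous_toS1).isClosed
  have hEmeas : MeasurableSet (toS1 '' cantorPi) := hEcl.measurableSet
  refine ⟨(toS1 '' cantorPi)ᶜ, hEmeas.compl, ?_, ?_⟩
  · rw [muS, Measure.map_apply measurable_toS1 hEmeas.compl]
    have h0 : rhoR cantorPiᶜ = 0 := by
      rw [rhoR_apply, compl_inter_self, measure_empty, mul_zero]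
    refine measure_mono_null ?_ h0
    intro b hb hbC
    exact hb (mem_image_of_mem _ hbC)
  · rw [compl_compl]
    have hproj := AddCircle.add_projection_respects_measure (T := 2*π) (-π) hEmeas
    rw [hproj]
    have hsub : (QuotientAddGroup.mk ⁻¹' (toS1 '' cantorPi) : Set ℝ) ∩ Ioc (-π) (-π + 2*π)
        ⊆ ⋃ k : ℤ, (fun y : ℝ => y + k * (2*π)) '' cantorPi := by
      rintro b ⟨hb, -⟩
      obtain ⟨y, hy, hxy⟩ := hb
      have h3 : toS1 (b - y) = 0 := by
        rw [show toS1 (b-y) = toS1 b - toS1 y from QuotientAddGroup.mk_sub _ b y]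
        rw [show toS1 y = toS1 b from hxy]
        simp
      obtain ⟨k, hk⟩ := (AddCircle.coe_eq_zero_iff (2*π)).mp h3
      rw [zsmul_eq_mul] at hk
      refine mem_iUnion.mpr ⟨k, ⟨y, hy, ?_⟩⟩
      simp only
      linarith [hk]
    have hnull : (volume : Measure ℝ) (⋃ k : ℤ, (fun y : ℝ => y + k * (2*π)) '' cantorPi) = 0 := by
      apply measure_iUnion_null
      intro k
      have him : (fun y : ℝ => y + k * (2*π)) '' cantorPi
          = (fun y : ℝ => y + (-(k * (2*π)))) ⁻¹' cantorPi := by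
        ext z
        constructor
        · rintro ⟨y, hy, rfl⟩
          have : y + k * (2*π) + (-(k * (2*π))) = y := by ring
          rw [mem_preimage, this]
          exact hy
        · intro hz
          exact ⟨z + (-(k * (2*π))), hz, by ring⟩
      rw [him, measure_preimage_add_right]
      exact volume_cantorPi
    exact measure_mono_null hsub hnull

end Stmt2Aux

/-- For `s = log 2 / log 3`, the Cantor set `C ⊆ [-π,π]` has
`0 < H^s(C) < ∞`; the normalized restriction of `H^s` to `C`, viewed on `S¹`, is a
probability measure, singular w.r.t. Lebesgue measure, with finite interaction energy
`F₀[μ^s] < ∞`. -/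
theorem stmt2 :
    0 < μH[Real.log 2 / Real.log 3] cantorPi ∧
    μH[Real.log 2 / Real.log 3] cantorPi < ⊤ ∧
    IsProbabilityMeasure
      (((μH[Real.log 2 / Real.log 3] cantorPi)⁻¹ •
        (μH[Real.log 2 / Real.log 3]).restrict cantorPi).map toS1) ∧
    (((μH[Real.log 2 / Real.log 3] cantorPi)⁻¹ •
        (μH[Real.log 2 / Real.log 3]).restrict cantorPi).map toS1) ⟂ₘ
      (volume : Measure S1) ∧
    interactionF
      (((μH[Real.log 2 / Real.log 3] cantorPi)⁻¹ •
        (μH[Real.log 2 / Real.log 3]).restrict cantorPi).map toS1) < ⊤ :=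
  ⟨Stmt2Aux.HcantorPi_pos, Stmt2Aux.HcantorPi_lt_top, Stmt2Aux.muS_prob, Stmt2Aux.muS_sing,
    Stmt2Aux.interaction_lt_top⟩
end
end

section
/- There exists a constant C > 0, independent of μ, such that for every μ ∈ P(S¹) and every 2π-periodic function φ of class C¹, |L_μ(φ)| ≤ C ‖φ′‖_{L^∞}. In particular, for any δ ∈ (0, π/2) such that sin(t)/t ≥ 1/2 for |t| < δ, one may take the bound (1/π)[1 + 2π cot(δ)] ‖φ′‖_{L^∞} for the normalized functional (1/2π)L_μ. -/
open MeasureTheory Filter Real Set Topology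
open scoped ENNReal

noncomputable section

attribute [local instance] Classical.propDecidable

lemma reprIco_mem (z : S1) : reprIco z ∈ Ico (-π) π := by
  have h := ((AddCircle.equivIco (2 * π) (-π)) z).2
  simp only [show -π + 2 * π = π by ring] at h
  exact h

lemma coe_reprIco (z : S1) : ((reprIco z : ℝ) : S1) = z :=
  (AddCircle.equivIco (2 * π) (-π)).symm_apply_apply z

lemma measurable_reprIco : Measurable reprIco :=
  measurable_subtype_coe.comp (AddCircle.measurableEquivIco (T := 2 * π) (-π)).measurable

lemma tcos_le_sin {t : ℝ} (h0 : 0 ≤ t) (h1 : t ≤ π / 2) : t * Real.cos t ≤ Real.sin t := by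
  rcases eq_or_lt_of_le h0 with h | h
  · simp [← h]
  rcases eq_or_lt_of_le h1 with h' | h'
  · rw [h', Real.cos_pi_div_two, Real.sin_pi_div_two]
    nlinarith
  have htan := Real.lt_tan h h'
  have hc : 0 < Real.cos t := Real.cos_pos_of_mem_Ioo ⟨by linarith [Real.pi_pos], h'⟩
  have h2 : t * Real.cos t < Real.tan t * Real.cos t := mul_lt_mul_of_pos_right htan hc
  rw [Real.tan_eq_sin_div_cos, div_mul_cancel₀ _ (ne_of_gt hc)] at h2
  exact h2.le

lemma cot_aux {s : ℝ} (h0 : 0 ≤ s) (h1 : s ≤ π / 2) :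
    Real.cos s / Real.sin s * (2 * s) ≤ 2 := by
  have hpi := Real.pi_pos
  rcases eq_or_lt_of_le (Real.sin_nonneg_of_nonneg_of_le_pi h0 (by linarith)) with hs | hs
  · rw [← hs, div_zero, zero_mul]; norm_num
  · rw [div_mul_eq_mul_div, div_le_iff₀ hs]
    nlinarith [tcos_le_sin h0 h1]

lemma cot_abs {s : ℝ} (h : |s| ≤ π / 2) : |Real.cos s / Real.sin s * (2 * s)| ≤ 2 := by
  have hpi := Real.pi_pos
  rcases le_or_gt 0 s with h0 | h0
  · rw [abs_of_nonneg h0] at h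
    have hnn : 0 ≤ Real.cos s / Real.sin s * (2 * s) := by
      apply mul_nonneg _ (by linarith)
      exact div_nonneg (Real.cos_nonneg_of_mem_Icc ⟨by linarith, h⟩)
        (Real.sin_nonneg_of_nonneg_of_le_pi h0 (by linarith))
    rw [abs_of_nonneg hnn]
    exact cot_aux h0 h
  · rw [abs_of_neg h0] at h
    have key : Real.cos s / Real.sin s * (2 * s)
        = Real.cos (-s) / Real.sin (-s) * (2 * (-s)) := by
      rw [Real.cos_neg, Real.sin_neg, div_neg]
      ring
    rw [key]
    have h0' : 0 ≤ -s := by linarith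
    have hnn : 0 ≤ Real.cos (-s) / Real.sin (-s) * (2 * (-s)) := by
      apply mul_nonneg _ (by linarith)
      exact div_nonneg (Real.cos_nonneg_of_mem_Icc ⟨by linarith, h⟩)
        (Real.sin_nonneg_of_nonneg_of_le_pi h0' (by linarith))
    rw [abs_of_nonneg hnn]
    exact cot_aux h0' h

lemma Lintegrand_abs_le {φ : ℝ → ℝ} (hφ : PerC1 φ) {M : ℝ} (hM : ∀ x, |deriv φ x| ≤ M)
    (p : S1 × S1) : |Lintegrand φ p| ≤ 2 * M := by
  obtain ⟨hc1, hper⟩ := hφ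
  have hpi := Real.pi_pos
  have hMnn : 0 ≤ M := le_trans (abs_nonneg _) (hM 0)
  obtain ⟨hr1, hr2⟩ := reprIco_mem (p.1 - p.2)
  -- periodic difference bound
  have hz : ((reprIco p.1 - reprIco p.2 - reprIco (p.1 - p.2) : ℝ) : S1) = 0 := by
    rw [AddCircle.coe_sub, AddCircle.coe_sub, coe_reprIco, coe_reprIco, coe_reprIco]
    abel
  obtain ⟨k, hk⟩ := (AddCircle.coe_eq_zero_iff (2 * π)).mp hz
  have hxy : reprIco p.1 = (reprIco p.2 + reprIco (p.1 - p.2)) + k * (2 * π) := by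
    have h1 : (k : ℝ) * (2 * π) = k • (2 * π) := by simp
    rw [h1, hk]; ring
  have hφeq : φ (reprIco p.1) = φ (reprIco p.2 + reprIco (p.1 - p.2)) := by
    rw [hxy]; exact (hper.int_mul k) _
  have hdiff : |φ (reprIco p.1) - φ (reprIco p.2)| ≤ M * |reprIco (p.1 - p.2)| := by
    rw [hφeq]
    have := Convex.norm_image_sub_le_of_norm_deriv_le (f := φ) (C := M) (s := univ)
      (fun x _ => (hc1.differentiable one_ne_zero).differentiableAt)
      (fun x _ => by rw [Real.norm_eq_abs]; exact hM x) convex_univ (mem_univ (reprIco p.2))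
      (mem_univ (reprIco p.2 + reprIco (p.1 - p.2)))
    simpa [Real.norm_eq_abs, abs_sub_comm] using this
  have hhalf : |reprIco (p.1 - p.2) / 2| ≤ π / 2 := by
    rw [abs_div, abs_of_pos (by norm_num : (0:ℝ) < 2)]
    apply div_le_div_of_nonneg_right _ (by norm_num)
    rw [abs_le]; constructor <;> linarith
  have hcot : |cotHalf (p.1 - p.2) * (2 * (reprIco (p.1 - p.2) / 2))| ≤ 2 := by
    exact cot_abs hhalf
  calc |Lintegrand φ p|
      = |cotHalf (p.1 - p.2)| * |φ (reprIco p.1) - φ (reprIco p.2)| := abs_mul _ _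
    _ ≤ |cotHalf (p.1 - p.2)| * (M * |reprIco (p.1 - p.2)|) := by
        exact mul_le_mul_of_nonneg_left hdiff (abs_nonneg _)
    _ = |cotHalf (p.1 - p.2) * (2 * (reprIco (p.1 - p.2) / 2))| * M := by
        rw [show (2:ℝ) * (reprIco (p.1 - p.2) / 2) = reprIco (p.1 - p.2) by ring, abs_mul]
        ring
    _ ≤ 2 * M := mul_le_mul_of_nonneg_right hcot hMnn

lemma measurable_Lintegrand {φ : ℝ → ℝ} (hφ : PerC1 φ) : Measurable (Lintegrand φ) := by
  have hm : Measurable fun p : S1 × S1 => p.1 - p.2 := measurable_fst.sub measurable_snd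
  have hcot : Measurable cotHalf := by
    exact (Real.measurable_cos.comp (measurable_reprIco.div_const 2)).div
      (Real.measurable_sin.comp (measurable_reprIco.div_const 2))
  have hφm : Measurable φ := (hφ.1.continuous).measurable
  exact ((hcot.comp hm).mul
    ((hφm.comp (measurable_reprIco.comp measurable_fst)).sub
      (hφm.comp (measurable_reprIco.comp measurable_snd))))


/-- Uniform bound on `L_μ`: there is `C > 0`, independent of `μ` and `φ`,
with `|L_μ(φ)| ≤ C ‖φ′‖_∞` for all `μ ∈ P(S¹)` and all 2π-periodic `C¹` functions `φ`
(the integrand being integrable); moreover for any `δ ∈ (0, π/2)` with `sin t / t ≥ 1/2` for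
`0 < |t| < δ`, the bound `(1/π)(1 + 2π cot δ)‖φ′‖_∞` holds for `(1/2π) L_μ`. -/
theorem stmt17 :
    (∃ C : ℝ, 0 < C ∧ ∀ μ : Measure S1, IsProbabilityMeasure μ →
      ∀ φ : ℝ → ℝ, PerC1 φ → ∀ M : ℝ, (∀ x, |deriv φ x| ≤ M) →
        Integrable (Lintegrand φ) (μ.prod μ) ∧ |Lfun φ μ| ≤ C * M) ∧
    (∀ δ : ℝ, 0 < δ → δ < π / 2 →
      (∀ t : ℝ, t ≠ 0 → |t| < δ → 1 / 2 ≤ Real.sin t / t) →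
      ∀ μ : Measure S1, IsProbabilityMeasure μ →
        ∀ φ : ℝ → ℝ, PerC1 φ → ∀ M : ℝ, (∀ x, |deriv φ x| ≤ M) →
          |(1 / (2 * π)) * Lfun φ μ| ≤
            (1 / π) * (1 + 2 * π * (Real.cos δ / Real.sin δ)) * M) := by
  have hpi := Real.pi_pos
  have key : ∀ μ : Measure S1, IsProbabilityMeasure μ →
      ∀ φ : ℝ → ℝ, PerC1 φ → ∀ M : ℝ, (∀ x, |deriv φ x| ≤ M) →
        Integrable (Lintegrand φ) (μ.prod μ) ∧ |Lfun φ μ| ≤ 2 * M := by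
    intro μ hμ φ hφ M hM
    have hb := Lintegrand_abs_le hφ hM
    constructor
    · refine (integrable_const (2 * M)).mono' (measurable_Lintegrand hφ).aestronglyMeasurable ?_
      exact Eventually.of_forall fun p => by rw [Real.norm_eq_abs]; exact hb p
    · have inner : ∀ x : S1, ‖∫ y, Lintegrand φ (x, y) ∂μ‖ ≤ 2 * M := by
        intro x
        have := norm_integral_le_of_norm_le_const (μ := μ)
          (f := fun y => Lintegrand φ (x, y)) (C := 2 * M)
          (Eventually.of_forall fun y => by rw [Real.norm_eq_abs]; exact hb (x, y))
        simpa [measure_univ] using this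
      have := norm_integral_le_of_norm_le_const (μ := μ)
        (f := fun x => ∫ y, Lintegrand φ (x, y) ∂μ) (C := 2 * M)
        (Eventually.of_forall inner)
      rw [Lfun, ← Real.norm_eq_abs]
      simpa [measure_univ] using this
  constructor
  · exact ⟨2, by norm_num, key⟩
  · intro δ hδ0 hδ1 _ μ hμ φ hφ M hM
    have hMnn : 0 ≤ M := le_trans (abs_nonneg _) (hM 0)
    have h2 := (key μ hμ φ hφ M hM).2
    have hsin : 0 < Real.sin δ := Real.sin_pos_of_pos_of_lt_pi hδ0 (by linarith)
    have hcos : 0 ≤ Real.cos δ := Real.cos_nonneg_of_mem_Icc ⟨by linarith, hδ1.le⟩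
    have hcotnn : 0 ≤ Real.cos δ / Real.sin δ := div_nonneg hcos hsin.le
    rw [abs_mul, abs_of_pos (by positivity : (0:ℝ) < 1 / (2 * π))]
    have h3 : 1 / (2 * π) * |Lfun φ μ| ≤ 1 / (2 * π) * (2 * M) :=
      mul_le_mul_of_nonneg_left h2 (by positivity)
    have h4 : 1 / (2 * π) * (2 * M) = (1 / π) * M := by field_simp
    have h5 : (1 / π) * M ≤ (1 / π) * (1 + 2 * π * (Real.cos δ / Real.sin δ)) * M := by
      apply mul_le_mul_of_nonneg_right _ hMnn
      have h6 : 0 ≤ (1 / π) * (2 * π * (Real.cos δ / Real.sin δ)) := by positivity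
      nlinarith
    linarith

end
end
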